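/- arXiv:1805.08461 — 3 statements merged into one kernel-verified Lean document; each statement's English description precedes it below -/
import Mathlib

section
/- For every n ≥ 1 and every vertex u of BH_n, the vertex u′ obtained from u by replacing its first coordinate u 0 by u 0 + 2 (and leaving all other coordinates unchanged) satisfies N(u) = N(u′), i.e., u and u′ have exactly the same set of neighbors in BH_n. -/
open SimpleGraph

/-- `bhSigma u` is 1 if the inner index `u 0` is 0 or 2, and 3 (= -1) otherwise. -/
def bhSigma {n : ℕ} [NeZero n] (u : Fin n → ZMod 4) : ZMod 4 :=
  if u 0 = 0 ∨ u 0 = 2 then 1 else 3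

/-- The adjacency relation underlying the balanced hypercube `BH n`. -/
def bhRel {n : ℕ} [NeZero n] (u v : Fin n → ZMod 4) : Prop :=
  ∃ ε : ZMod 4, (ε = 1 ∨ ε = 3) ∧
    ((v 0 = u 0 + ε ∧ ∀ i : Fin n, i ≠ 0 → v i = u i) ∨
     (∃ i : Fin n, 1 ≤ (i : ℕ) ∧ v 0 = u 0 + ε ∧ v i = u i + bhSigma u ∧
        ∀ j : Fin n, j ≠ 0 → j ≠ i → v j = u j))

/-- The `n`-dimensional balanced hypercube. -/
def BH (n : ℕ) [NeZero n] : SimpleGraph (Fin n → ZMod 4) :=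
  SimpleGraph.fromRel bhRel

/-- `F` is a restricted `h`-vertex cut of `G`: deleting `F` disconnects `G`,
and every vertex of the remaining graph has at least `h` neighbours there
(equivalently, every connected component has minimum degree at least `h`). -/
def IsRestrictedCut {V : Type*} (G : SimpleGraph V) (h : ℕ) (F : Set V) : Prop :=
  ¬ (G.induce Fᶜ).Connected ∧
    ∀ v : ↥Fᶜ, h ≤ ((G.induce Fᶜ).neighborSet v).ncard

/-- `F` is a `g`-vertex cut of `G`: deleting `F` disconnects `G`, and every
connected component of the remaining graph has at least `g + 1` vertices. -/
def IsGVertexCut {V : Type*} (G : SimpleGraph V) (g : ℕ) (F : Set V) : Prop :=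
  ¬ (G.induce Fᶜ).Connected ∧
    ∀ C : (G.induce Fᶜ).ConnectedComponent, g + 1 ≤ C.supp.ncard

/-- The vertex neighbourhood of a set `S`: vertices outside `S` adjacent to some vertex of `S`. -/
def setNbhd {V : Type*} (G : SimpleGraph V) (S : Set V) : Set V :=
  {v | v ∉ S ∧ ∃ u ∈ S, G.Adj v u}

/-- The vertex of `BH n` with first three coordinates `a, b, c` and all others `0`. -/
def tVertex (n : ℕ) (a b c : ZMod 4) : Fin n → ZMod 4 :=
  fun j => if (j : ℕ) = 0 then a else if (j : ℕ) = 1 then b else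
    if (j : ℕ) = 2 then c else 0

/-- The distinguished 12-vertex set `T` in `BH n` (`n ≥ 3`). -/
def Tset (n : ℕ) : Set (Fin n → ZMod 4) :=
  {tVertex n 0 0 0, tVertex n 2 0 0, tVertex n 1 0 0, tVertex n 3 0 0,
   tVertex n 0 3 0, tVertex n 2 3 0, tVertex n 1 0 1, tVertex n 3 0 1,
   tVertex n 0 3 1, tVertex n 2 3 1, tVertex n 1 3 1, tVertex n 3 3 1}

/-- The last coordinate `u (n-1)` of a vertex of `BH n`. -/
def lastCoord (n : ℕ) [NeZero n] (u : Fin n → ZMod 4) : ZMod 4 :=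
  u ⟨n - 1, Nat.sub_lt (Nat.pos_of_ne_zero (NeZero.ne n)) Nat.one_pos⟩

lemma four_eq_zero : (4 : ZMod 4) = 0 := by decide

lemma bhSigma_shift {n : ℕ} [NeZero n] (u : Fin n → ZMod 4) :
    bhSigma (Function.update u 0 (u 0 + 2)) = bhSigma u := by
  simp only [bhSigma, Function.update_self]
  have h : ∀ x : ZMod 4, ((x + 2 = 0 ∨ x + 2 = 2) ↔ (x = 0 ∨ x = 2)) := by decide
  rw [if_congr (h (u 0)) rfl rfl]

lemma bhRel_shift_left {n : ℕ} [NeZero n] (u v : Fin n → ZMod 4)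
    (h : bhRel u v) : bhRel (Function.update u 0 (u 0 + 2)) v := by
  obtain ⟨ε, hε, h⟩ := h
  refine ⟨ε + 2, ?_, ?_⟩
  · rcases hε with h1 | h1 <;> subst h1 <;> [right; left] <;> decide
  rcases h with ⟨h0, hrest⟩ | ⟨i, hi1, h0, hi, hrest⟩
  · left
    constructor
    · rw [Function.update_self, h0,
        show u 0 + 2 + (ε + 2) = u 0 + ε + 4 from by ring, four_eq_zero, add_zero]
    · intro i hi; rw [Function.update_of_ne hi]; exact hrest i hi
  · right
    have hine : i ≠ 0 := by
      intro h; subst h; simp at hi1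
    refine ⟨i, hi1, ?_, ?_, ?_⟩
    · rw [Function.update_self, h0,
        show u 0 + 2 + (ε + 2) = u 0 + ε + 4 from by ring, four_eq_zero, add_zero]
    · rw [Function.update_of_ne hine, bhSigma_shift]; exact hi
    · intro j hj0 hji; rw [Function.update_of_ne hj0]; exact hrest j hj0 hji

lemma bhRel_shift_right {n : ℕ} [NeZero n] (u v : Fin n → ZMod 4)
    (h : bhRel v u) : bhRel v (Function.update u 0 (u 0 + 2)) := by
  obtain ⟨ε, hε, h⟩ := h
  refine ⟨ε + 2, ?_, ?_⟩
  · rcases hε with h1 | h1 <;> subst h1 <;> [right; left] <;> decide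
  rcases h with ⟨h0, hrest⟩ | ⟨i, hi1, h0, hi, hrest⟩
  · left
    constructor
    · rw [Function.update_self, h0]; ring
    · intro i hi; rw [Function.update_of_ne hi]; exact hrest i hi
  · right
    have hine : i ≠ 0 := by
      intro h; subst h; simp at hi1
    refine ⟨i, hi1, ?_, ?_, ?_⟩
    · rw [Function.update_self, h0]; ring
    · rw [Function.update_of_ne hine]; exact hi
    · intro j hj0 hji; rw [Function.update_of_ne hj0]; exact hrest j hj0 hji

lemma bhRel_zero {n : ℕ} [NeZero n] {u v : Fin n → ZMod 4}
    (h : bhRel u v ∨ bhRel v u) :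
    ∃ ε : ZMod 4, (ε = 1 ∨ ε = 3) ∧ v 0 = u 0 + ε := by
  rcases h with ⟨ε, hε, h⟩ | ⟨ε, hε, h⟩
  · exact ⟨ε, hε, by rcases h with ⟨h0, _⟩ | ⟨i, _, h0, _, _⟩ <;> exact h0⟩
  · refine ⟨-ε, ?_, ?_⟩
    · rcases hε with h1 | h1 <;> subst h1 <;> [right; left] <;> decide
    · have h0 : u 0 = v 0 + ε := by rcases h with ⟨h0, _⟩ | ⟨i, _, h0, _, _⟩ <;> exact h0
      rw [h0]; ring

lemma bh_adj_shift {n : ℕ} [NeZero n] (u v : Fin n → ZMod 4)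
    (h : (BH n).Adj u v) : (BH n).Adj (Function.update u 0 (u 0 + 2)) v := by
  rw [BH, SimpleGraph.fromRel_adj] at h ⊢
  obtain ⟨hne, h⟩ := h
  refine ⟨?_, ?_⟩
  · obtain ⟨ε, hε, h0⟩ := bhRel_zero h
    intro hcon
    have : v 0 = u 0 + 2 := by rw [← hcon, Function.update_self]
    have h2 : ε = 2 := by
      have := h0.symm.trans this
      exact add_left_cancel this
    rcases hε with h1 | h1 <;> rw [h1] at h2 <;> exact absurd h2 (by decide)
  · rcases h with h | h
    · exact Or.inl (bhRel_shift_left u v h)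
    · exact Or.inr (bhRel_shift_right u v h)

lemma update_invol {n : ℕ} [NeZero n] (u : Fin n → ZMod 4) :
    Function.update (Function.update u 0 (u 0 + 2)) 0
      (Function.update u 0 (u 0 + 2) 0 + 2) = u := by
  funext j
  by_cases hj : j = 0
  · subst hj
    rw [Function.update_self, Function.update_self,
      show u 0 + 2 + 2 = u 0 + 4 from by ring, four_eq_zero, add_zero]
  · rw [Function.update_of_ne hj, Function.update_of_ne hj]

theorem bh_same_neighborhood (n : ℕ) [NeZero n] (hn : 1 ≤ n) (u : Fin n → ZMod 4) :
    (BH n).neighborSet u = (BH n).neighborSet (Function.update u 0 (u 0 + 2)) := by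
  ext v
  simp only [SimpleGraph.mem_neighborSet]
  constructor
  · exact bh_adj_shift u v
  · intro h
    have := bh_adj_shift (Function.update u 0 (u 0 + 2)) v h
    rwa [update_invol] at this
end

section
/- For every n ≥ 2 and every k ∈ ZMod 4, the number of edges of BH_n having one endpoint with last coordinate equal to k and the other endpoint with last coordinate equal to k + 1 is exactly 4^{n−1}. -/
open SimpleGraph

set_option linter.unusedSectionVars false

namespace BHCross

/-- The last index of `Fin n`. -/
def lastIdx (n : ℕ) [NeZero n] : Fin n :=
  ⟨n - 1, Nat.sub_lt (Nat.pos_of_ne_zero (NeZero.ne n)) Nat.one_pos⟩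

def lo (b : Bool) : ZMod 4 := if b then 0 else 2

def eps (b : Bool) : ZMod 4 := if b then 1 else 3

lemma lo_injective : Function.Injective lo := by decide

lemma eps_injective : Function.Injective eps := by decide

lemma lo_eq (x : ZMod 4) (h : x = 0 ∨ x = 2) : lo (decide (x = 0)) = x := by
  rcases h with rfl | rfl <;> decide

lemma eps_eq (x : ZMod 4) (h : x = 1 ∨ x = 3) : eps (decide (x = 1)) = x := by
  rcases h with rfl | rfl <;> decide

lemma lo_mem (b : Bool) : lo b = 0 ∨ lo b = 2 := by cases b <;> decide

lemma eps_mem (b : Bool) : eps b = 1 ∨ eps b = 3 := by cases b <;> decide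

def baseV (n : ℕ) (k : ZMod 4) (b : Bool) (g : Fin (n - 2) → ZMod 4) : Fin n → ZMod 4 :=
  fun j => if h1 : (j : ℕ) = 0 then lo b else if h2 : (j : ℕ) = n - 1 then k
    else g ⟨(j : ℕ) - 1, by have := j.isLt; omega⟩

def topV (n : ℕ) (k : ZMod 4) (b1 b2 : Bool) (g : Fin (n - 2) → ZMod 4) : Fin n → ZMod 4 :=
  fun j => if h1 : (j : ℕ) = 0 then lo b1 + eps b2 else if h2 : (j : ℕ) = n - 1 then k + 1
    else g ⟨(j : ℕ) - 1, by have := j.isLt; omega⟩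

variable {n : ℕ} [NeZero n] {k : ZMod 4} {b b1 b2 : Bool} {g : Fin (n - 2) → ZMod 4}

lemma baseV_zero : baseV n k b g 0 = lo b := by
  unfold baseV; rw [dif_pos (Fin.val_zero n)]

lemma topV_zero : topV n k b1 b2 g 0 = lo b1 + eps b2 := by
  unfold topV; rw [dif_pos (Fin.val_zero n)]

lemma baseV_last (hn : 2 ≤ n) : baseV n k b g (lastIdx n) = k := by
  unfold baseV lastIdx
  rw [dif_neg (by simp; omega), dif_pos rfl]

lemma topV_last (hn : 2 ≤ n) : topV n k b1 b2 g (lastIdx n) = k + 1 := by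
  unfold topV lastIdx
  rw [dif_neg (by simp; omega), dif_pos rfl]

lemma baseV_mid (j : Fin n) (h1 : (j : ℕ) ≠ 0) (h2 : (j : ℕ) ≠ n - 1) :
    baseV n k b g j = g ⟨(j : ℕ) - 1, by have := j.isLt; omega⟩ := by
  unfold baseV; rw [dif_neg h1, dif_neg h2]

lemma topV_mid (j : Fin n) (h1 : (j : ℕ) ≠ 0) (h2 : (j : ℕ) ≠ n - 1) :
    topV n k b1 b2 g j = g ⟨(j : ℕ) - 1, by have := j.isLt; omega⟩ := by
  unfold topV; rw [dif_neg h1, dif_neg h2]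

lemma lastIdx_ne_zero (hn : 2 ≤ n) : lastIdx n ≠ 0 := by
  intro h
  have : (lastIdx n : ℕ) = 0 := by rw [h]; exact Fin.val_zero n
  simp [lastIdx] at this; omega

lemma k_ne (k : ZMod 4) : k ≠ k + 1 := by
  intro h
  have h' : k + 0 = k + 1 := by rw [add_zero]; exact h
  exact (show (1 : ZMod 4) ≠ 0 by decide) (add_left_cancel h').symm

/-- Construction lemma: from the coordinate description, `u` and `v` are in the
range of the parametrization. -/
lemma build (hn : 2 ≤ n) (u v : Fin n → ZMod 4)
    (hu0 : u 0 = 0 ∨ u 0 = 2) (hd : v 0 - u 0 = 1 ∨ v 0 - u 0 = 3)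
    (hu : u (lastIdx n) = k) (hv : v (lastIdx n) = k + 1)
    (hmid : ∀ j : Fin n, j ≠ 0 → j ≠ lastIdx n → v j = u j) :
    ∃ b1 b2 g, u = baseV n k b1 g ∧ v = topV n k b1 b2 g := by
  refine ⟨decide (u 0 = 0), decide (v 0 - u 0 = 1),
    fun j => u ⟨(j : ℕ) + 1, by have := j.isLt; omega⟩, ?_, ?_⟩
  · funext j
    by_cases h1 : (j : ℕ) = 0
    · have hj : j = 0 := Fin.ext (by simp [h1])
      subst hj
      rw [baseV_zero, lo_eq _ hu0]
    · by_cases h2 : (j : ℕ) = n - 1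
      · have hj : j = lastIdx n := Fin.ext h2
        rw [hj, baseV_last hn, hu]
      · rw [baseV_mid j h1 h2]
        congr 1
        exact Fin.ext (by simp; omega)
  · funext j
    by_cases h1 : (j : ℕ) = 0
    · have hj : j = 0 := Fin.ext (by simp [h1])
      subst hj
      rw [topV_zero, lo_eq _ hu0, eps_eq _ hd]
      ring
    · by_cases h2 : (j : ℕ) = n - 1
      · have hj : j = lastIdx n := Fin.ext h2
        rw [hj, topV_last hn, hv]
      · rw [topV_mid j h1 h2, hmid j (fun hh => h1 (by rw [hh]; exact Fin.val_zero n))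
          (fun hh => h2 (by rw [hh]; rfl))]
        congr 1
        exact Fin.ext (by simp; omega)

/-- Structure lemma: any `bhRel u v` crossing from level `k` to `k+1`. -/
lemma struct (hn : 2 ≤ n) (u v : Fin n → ZMod 4) (h : bhRel u v)
    (hu : u (lastIdx n) = k) (hv : v (lastIdx n) = k + 1) :
    ∃ b1 b2 g, u = baseV n k b1 g ∧ v = topV n k b1 b2 g := by
  obtain ⟨ε, hε, hcase⟩ := h
  have hk : k ≠ k + 1 := k_ne k
  rcases hcase with ⟨h0, hrest⟩ | ⟨i, hi1, h0, hi, hrest⟩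
  · exfalso
    have h' := hrest (lastIdx n) (lastIdx_ne_zero hn)
    rw [hv, hu] at h'
    exact hk h'.symm
  · have hieq : i = lastIdx n := by
      by_contra hne
      have h' := hrest (lastIdx n) (lastIdx_ne_zero hn) (fun hh => hne hh.symm)
      rw [hv, hu] at h'
      exact hk h'.symm
    subst hieq
    have hσ : bhSigma u = 1 := by
      have h1 : v (lastIdx n) = k + bhSigma u := by rw [hi, hu]
      have h2 : k + 1 = k + bhSigma u := by rw [← hv]; exact h1
      exact (add_left_cancel h2).symm
    have hu0 : u 0 = 0 ∨ u 0 = 2 := by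
      by_contra hc
      rw [bhSigma, if_neg hc] at hσ
      exact absurd hσ (by decide)
    have hd : v 0 - u 0 = 1 ∨ v 0 - u 0 = 3 := by
      have h3 : v 0 - u 0 = ε := by rw [h0]; ring
      rw [h3]; exact hε
    exact build hn u v hu0 hd hu hv hrest

/-- Structure lemma, reversed direction. -/
lemma struct' (hn : 2 ≤ n) (u v : Fin n → ZMod 4) (h : bhRel v u)
    (hu : u (lastIdx n) = k) (hv : v (lastIdx n) = k + 1) :
    ∃ b1 b2 g, u = baseV n k b1 g ∧ v = topV n k b1 b2 g := by
  obtain ⟨ε, hε, hcase⟩ := h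
  have hk : k ≠ k + 1 := k_ne k
  rcases hcase with ⟨h0, hrest⟩ | ⟨i, hi1, h0, hi, hrest⟩
  · exfalso
    have h' := hrest (lastIdx n) (lastIdx_ne_zero hn)
    rw [hv, hu] at h'
    exact hk h'
  · have hieq : i = lastIdx n := by
      by_contra hne
      have h' := hrest (lastIdx n) (lastIdx_ne_zero hn) (fun hh => hne hh.symm)
      rw [hv, hu] at h'
      exact hk h'
    subst hieq
    have hσ : bhSigma v = 3 := by
      have h2 : k + 0 = k + (1 + bhSigma v) := by
        rw [add_zero, ← add_assoc, ← hv, ← hu]; exact hi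
      have h3 : (0 : ZMod 4) = 1 + bhSigma v := add_left_cancel h2
      have h4 := eq_neg_of_add_eq_zero_right h3.symm
      rw [h4]; decide
    have hv0 : v 0 = 1 ∨ v 0 = 3 := by
      by_cases hc : v 0 = 0 ∨ v 0 = 2
      · rw [bhSigma, if_pos hc] at hσ
        exact absurd hσ (by decide)
      · revert hc
        generalize v 0 = x
        revert x; decide
    have hu0 : u 0 = 0 ∨ u 0 = 2 := by
      rw [h0]
      rcases hv0 with h' | h' <;> rcases hε with h'' | h'' <;> rw [h', h''] <;> decide
    have hd : v 0 - u 0 = 1 ∨ v 0 - u 0 = 3 := by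
      have h3 : v 0 - u 0 = -ε := by rw [h0]; ring
      rw [h3]
      rcases hε with h' | h' <;> rw [h'] <;> decide
    refine build hn u v hu0 hd hu hv ?_
    intro j hj0 hjl
    exact (hrest j hj0 hjl).symm

end BHCross
theorem bh_crossing_edges (n : ℕ) [NeZero n] (hn : 2 ≤ n) (k : ZMod 4) :
    {e : Sym2 (Fin n → ZMod 4) | e ∈ (BH n).edgeSet ∧
      ∃ u v : Fin n → ZMod 4, e = s(u, v) ∧ lastCoord n u = k ∧ lastCoord n v = k + 1}.ncard
      = 4 ^ (n - 1) := by
  classical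
  open BHCross in
  let F : Bool × Bool × (Fin (n - 2) → ZMod 4) → Sym2 (Fin n → ZMod 4) :=
    fun p => s(baseV n k p.1 p.2.2, topV n k p.1 p.2.1 p.2.2)
  have hlast : ∀ u : Fin n → ZMod 4, lastCoord n u = u (lastIdx n) := fun _ => rfl
  have hset : {e : Sym2 (Fin n → ZMod 4) | e ∈ (BH n).edgeSet ∧
      ∃ u v : Fin n → ZMod 4, e = s(u, v) ∧ lastCoord n u = k ∧ lastCoord n v = k + 1}
      = Set.range F := by
    ext e
    simp only [Set.mem_setOf_eq, Set.mem_range]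
    constructor
    · rintro ⟨he, u, v, rfl, hu, hv⟩
      rw [hlast] at hu hv
      rw [SimpleGraph.mem_edgeSet, BH, SimpleGraph.fromRel_adj] at he
      obtain ⟨-, hr | hr⟩ := he
      · obtain ⟨b1, b2, g, h1, h2⟩ := struct hn u v hr hu hv
        exact ⟨(b1, b2, g), by show s(_, _) = _; rw [← h1, ← h2]⟩
      · obtain ⟨b1, b2, g, h1, h2⟩ := struct' hn u v hr hu hv
        exact ⟨(b1, b2, g), by show s(_, _) = _; rw [← h1, ← h2]⟩
    · rintro ⟨⟨b1, b2, g⟩, rfl⟩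
      refine ⟨?_, baseV n k b1 g, topV n k b1 b2 g, rfl, ?_, ?_⟩
      · rw [SimpleGraph.mem_edgeSet, BH, SimpleGraph.fromRel_adj]
        refine ⟨?_, Or.inl ⟨eps b2, eps_mem b2, Or.inr
          ⟨lastIdx n, by simp [lastIdx]; omega, ?_, ?_, ?_⟩⟩⟩
        · intro h
          have h' := congrFun h (lastIdx n)
          rw [baseV_last hn, topV_last hn] at h'
          exact k_ne k h'
        · rw [topV_zero, baseV_zero]
        · rw [topV_last hn, baseV_last hn, bhSigma, if_pos (show baseV n k b1 g 0 = 0 ∨ baseV n k b1 g 0 = 2 by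
            rw [baseV_zero]; exact lo_mem b1)]
        · intro j hj0 hjl
          have h1 : (j : ℕ) ≠ 0 := fun hh => hj0 (Fin.ext (by simp [hh]))
          have h2 : (j : ℕ) ≠ n - 1 := fun hh => hjl (Fin.ext hh)
          rw [topV_mid j h1 h2, baseV_mid j h1 h2]
      · rw [hlast, baseV_last hn]
      · rw [hlast, topV_last hn]
  rw [hset, ← Nat.card_coe_set_eq]
  have hinj : Function.Injective F := by
    rintro ⟨b1, b2, g⟩ ⟨c1, c2, f⟩ h
    have h' : s(baseV n k b1 g, topV n k b1 b2 g)
        = s(baseV n k c1 f, topV n k c1 c2 f) := h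
    rw [Sym2.eq_iff] at h'
    rcases h' with ⟨h1, h2⟩ | ⟨h1, h2⟩
    · have hb1 : b1 = c1 := by
        apply lo_injective
        have h3 := congrFun h1 0
        rwa [baseV_zero, baseV_zero] at h3
      have hg : g = f := by
        funext j
        have hlt : (j : ℕ) + 1 < n := by have := j.isLt; omega
        have hjv : ((⟨(j : ℕ) + 1, hlt⟩ : Fin n) : ℕ) ≠ 0 := by simp
        have hjv2 : ((⟨(j : ℕ) + 1, hlt⟩ : Fin n) : ℕ) ≠ n - 1 := by
          have := j.isLt; simp only [Fin.val_mk]; omega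
        have h3 := congrFun h1 ⟨(j : ℕ) + 1, hlt⟩
        rw [baseV_mid _ hjv hjv2, baseV_mid _ hjv hjv2] at h3
        have hfin : (⟨((⟨(j : ℕ) + 1, hlt⟩ : Fin n) : ℕ) - 1,
            by have := j.isLt; simp only [Fin.val_mk]; omega⟩ : Fin (n - 2)) = j := Fin.ext (by simp)
        rwa [hfin] at h3
      have hb2 : b2 = c2 := by
        apply eps_injective
        have h3 := congrFun h2 0
        rw [topV_zero, topV_zero, hb1] at h3
        exact add_left_cancel h3
      rw [hb1, hb2, hg]
    · exfalso
      have h3 := congrFun h1 (lastIdx n)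
      rw [baseV_last hn, topV_last hn] at h3
      exact k_ne k h3
  rw [Nat.card_range_of_injective hinj]
  rw [Nat.card_eq_fintype_card, Fintype.card_prod, Fintype.card_prod, Fintype.card_bool,
    Fintype.card_fun, ZMod.card, Fintype.card_fin]
  rw [show n - 1 = (n - 2) + 1 by omega, pow_succ]
  ring
end

section
/- For every n ≥ 2, the restricted 1-connectivity of BH_n equals 4n − 4: there exists a restricted 1-vertex cut of BH_n of cardinality 4n − 4, and every restricted 1-vertex cut of BH_n has cardinality at least 4n − 4. -/
open SimpleGraph

set_option linter.unusedSectionVars false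
set_option linter.unusedVariables false

namespace BHaux

abbrev V (n : ℕ) := Fin n → ZMod 4

variable {n : ℕ} [NeZero n]

/-- σ as a function of the first coordinate value. -/
def sg (a : ZMod 4) : ZMod 4 := if a = 0 ∨ a = 2 then 1 else 3

lemma bhSigma_eq (u : V n) : bhSigma u = sg (u 0) := rfl

def N1 (u : V n) (ε : ZMod 4) : V n := Function.update u 0 (u 0 + ε)
def N2 (u : V n) (ε : ZMod 4) (i : Fin n) : V n :=
  Function.update (N1 u ε) i (u i + sg (u 0))
def tw (u : V n) : V n := Function.update u 0 (u 0 + 2)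

lemma sg_mem (a : ZMod 4) : sg a = 1 ∨ sg a = 3 := by
  unfold sg; split <;> simp

lemma sg_add_odd (a e : ZMod 4) (he : e = 1 ∨ e = 3) : sg (a + e) = - sg a := by
  revert a; rcases he with h | h <;> subst h <;> decide

lemma sg_add_two (a : ZMod 4) : sg (a + 2) = sg a := by revert a; decide

lemma add_odd_ne (a e : ZMod 4) (he : e = 1 ∨ e = 3) : a + e ≠ a := by
  revert a; rcases he with h | h <;> subst h <;> decide

lemma sg_ne_zero (a : ZMod 4) : sg a ≠ 0 := by
  rcases sg_mem a with h | h <;> rw [h] <;> decide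

lemma ite13_inj {b b' : Bool} (h : (if b then (1:ZMod 4) else 3) = (if b' then 1 else 3)) :
    b = b' := by
  cases b <;> cases b' <;> revert h <;> decide

@[simp] lemma N1_zero (u : V n) (ε : ZMod 4) : N1 u ε 0 = u 0 + ε := by
  simp [N1]

lemma N1_ne (u : V n) (ε : ZMod 4) (j : Fin n) (hj : j ≠ 0) : N1 u ε j = u j := by
  simp [N1, Function.update_of_ne hj]

lemma N2_zero (u : V n) (ε : ZMod 4) (i : Fin n) (hi : i ≠ 0) : N2 u ε i 0 = u 0 + ε := by
  simp [N2, Function.update_of_ne (Ne.symm hi)]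

lemma N2_self (u : V n) (ε : ZMod 4) (i : Fin n) : N2 u ε i i = u i + sg (u 0) := by
  simp [N2]

lemma N2_ne (u : V n) (ε : ZMod 4) (i j : Fin n) (hj : j ≠ 0) (hji : j ≠ i) :
    N2 u ε i j = u j := by
  simp [N2, Function.update_of_ne hji, N1_ne u ε j hj]

@[simp] lemma tw_zero (u : V n) : tw u 0 = u 0 + 2 := by simp [tw]

lemma tw_ne (u : V n) (j : Fin n) (hj : j ≠ 0) : tw u j = u j := by
  simp [tw, Function.update_of_ne hj]

lemma tw_tw (u : V n) : tw (tw u) = u := by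
  funext j
  by_cases hj : j = 0
  · subst hj; rw [tw_zero, tw_zero, add_assoc]
    have h4 : (2:ZMod 4) + 2 = 0 := rfl
    rw [h4, add_zero]
  · simp [tw_ne _ _ hj]

lemma tw_inj {u v : V n} (h : tw u = tw v) : u = v := by
  have := congrArg tw h; rwa [tw_tw, tw_tw] at this

/-- The key adjacency normal form. -/
lemma adj_iff (u v : V n) : (BH n).Adj u v ↔
    ∃ ε : ZMod 4, (ε = 1 ∨ ε = 3) ∧
      (v = N1 u ε ∨ ∃ i : Fin n, i ≠ 0 ∧ v = N2 u ε i) := by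
  constructor
  · rintro ⟨hne, h | h⟩
    · obtain ⟨ε, hε, h | ⟨i, hi1, h0, hii, hrest⟩⟩ := h
      · exact ⟨ε, hε, Or.inl (by
          funext j
          by_cases hj : j = 0
          · subst hj; simp [h.1]
          · rw [N1_ne u ε j hj]; exact h.2 j hj)⟩
      · have hi0 : i ≠ 0 := by
          intro h'; subst h'; simp at hi1
        exact ⟨ε, hε, Or.inr ⟨i, hi0, by
          funext j
          by_cases hj0 : j = 0
          · subst hj0; rw [N2_zero u ε i hi0, h0]
          · by_cases hji : j = i
            · subst hji; rw [N2_self, ← bhSigma_eq]; exact hii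
            · rw [N2_ne u ε i j hj0 hji]; exact hrest j hj0 hji⟩⟩
    · obtain ⟨ε, hε, h | ⟨i, hi1, h0, hii, hrest⟩⟩ := h
      · refine ⟨-ε, by rcases hε with h' | h' <;> subst h' <;> [right; left] <;> decide,
          Or.inl ?_⟩
        funext j
        by_cases hj : j = 0
        · subst hj; simp only [N1_zero, h.1]; ring
        · rw [N1_ne u _ j hj]; exact (h.2 j hj).symm
      · have hi0 : i ≠ 0 := by intro h'; subst h'; simp at hi1
        refine ⟨-ε, by rcases hε with h' | h' <;> subst h' <;> [right; left] <;> decide,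
          Or.inr ⟨i, hi0, ?_⟩⟩
        have hv0 : v 0 = u 0 + -ε := by rw [h0]; ring
        have hsg : sg (v 0) = - sg (u 0) := by
          rw [h0, sg_add_odd _ _ hε, neg_neg]
        funext j
        by_cases hj0 : j = 0
        · subst hj0; rw [N2_zero u _ i hi0]; exact hv0
        · by_cases hji : j = i
          · subst hji
            rw [N2_self]
            have : u j = v j + bhSigma v := hii
            rw [bhSigma_eq, hsg] at this
            rw [this]; ring
          · rw [N2_ne u _ i j hj0 hji]; exact (hrest j hj0 hji).symm
  · rintro ⟨ε, hε, h | ⟨i, hi0, h⟩⟩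
    · subst h
      refine ⟨?_, Or.inl ⟨ε, hε, Or.inl ⟨by simp, fun j hj => N1_ne u ε j hj⟩⟩⟩
      intro h'
      have h0 := congrFun h' 0
      rw [N1_zero] at h0
      exact add_odd_ne (u 0) ε hε h0.symm
    · subst h
      refine ⟨?_, Or.inl ⟨ε, hε, Or.inr ⟨i, by
        rcases Nat.eq_or_lt_of_le (Nat.zero_le (i : ℕ)) with h' | h'
        · exact absurd (Fin.ext h'.symm) hi0
        · exact h', N2_zero u ε i hi0, by rw [N2_self, bhSigma_eq],
        fun j hj0 hji => N2_ne u ε i j hj0 hji⟩⟩⟩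
      intro h'
      have h0 := congrFun h' 0
      rw [N2_zero u ε i hi0] at h0
      exact add_odd_ne (u 0) ε hε h0.symm

lemma N2_inj {u u' : V n} {i : Fin n} (hi : i ≠ 0) (ε : ZMod 4)
    (h : N2 u ε i = N2 u' ε i) : u = u' := by
  have h0 : u 0 = u' 0 := by
    have := congrFun h 0
    rw [N2_zero u ε i hi, N2_zero u' ε i hi] at this
    exact add_right_cancel this
  funext j
  by_cases hj0 : j = 0
  · subst hj0; exact h0
  · by_cases hji : j = i
    · subst hji
      have := congrFun h j
      rw [N2_self, N2_self, h0] at this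
      exact add_right_cancel this
    · have := congrFun h j
      rwa [N2_ne u ε i j hj0 hji, N2_ne u' ε i j hj0 hji] at this

lemma N2_one_eq_three {u u' : V n} {i : Fin n} (hi : i ≠ 0)
    (h : N2 u 1 i = N2 u' 3 i) : u' = tw u := by
  have h0 : u' 0 = u 0 + 2 := by
    have := congrFun h 0
    rw [N2_zero u 1 i hi, N2_zero u' 3 i hi] at this
    have : u 0 + 1 + 1 = u' 0 + 3 + 1 := by rw [this]
    rw [add_assoc, add_assoc] at this
    have h13 : (1:ZMod 4) + 1 = 2 := rfl
    have h31 : (3:ZMod 4) + 1 = 0 := rfl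
    rw [h13, h31, add_zero] at this
    exact this.symm
  funext j
  by_cases hj0 : j = 0
  · subst hj0; rw [h0, tw_zero]
  · by_cases hji : j = i
    · subst hji
      have := congrFun h j
      rw [N2_self, N2_self] at this
      have hs : sg (u' 0) = sg (u 0) := by rw [h0, sg_add_two]
      rw [hs] at this
      rw [tw_ne _ _ hj0]
      exact (add_right_cancel this).symm
    · have := congrFun h j
      rw [N2_ne u 1 i j hj0 hji, N2_ne u' 3 i j hj0 hji] at this
      rw [tw_ne _ _ hj0]; exact this.symm

lemma tw_N1 (u : V n) : tw (N1 u 1) = N1 u 3 := by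
  funext j
  by_cases hj : j = 0
  · subst hj; rw [tw_zero, N1_zero, N1_zero, add_assoc]; rfl
  · rw [tw_ne _ _ hj, N1_ne _ _ _ hj, N1_ne _ _ _ hj]

lemma tw_N2 (u : V n) (i : Fin n) (hi : i ≠ 0) : tw (N2 u 1 i) = N2 u 3 i := by
  funext j
  by_cases hj : j = 0
  · subst hj; rw [tw_zero, N2_zero u 1 i hi, N2_zero u 3 i hi, add_assoc]; rfl
  · by_cases hji : j = i
    · subst hji; rw [tw_ne _ _ hj, N2_self, N2_self]
    · rw [tw_ne _ _ hj, N2_ne u 1 i j hj hji, N2_ne u 3 i j hj hji]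

lemma not_adj_tw (u : V n) : ¬ (BH n).Adj u (tw u) := by
  rw [adj_iff]
  rintro ⟨ε, hε, h | ⟨i, hi0, h⟩⟩
  · have := congrFun h 0
    rw [tw_zero, N1_zero] at this
    have h2 : (2 : ZMod 4) = ε := add_left_cancel this
    rcases hε with h' | h' <;> subst h' <;> exact absurd h2 (by decide)
  · have := congrFun h i
    rw [tw_ne _ _ hi0, N2_self] at this
    exact sg_ne_zero (u 0) (left_eq_add.mp this)

/-- any neighbour's twin is also a neighbour -/
lemma adj_tw_of_adj {u v : V n} (h : (BH n).Adj u v) : (BH n).Adj u (tw v) := by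
  rw [adj_iff] at h ⊢
  obtain ⟨ε, hε, h | ⟨i, hi0, h⟩⟩ := h
  · subst h
    rcases hε with h' | h' <;> subst h'
    · exact ⟨3, Or.inr rfl, Or.inl (tw_N1 u)⟩
    · refine ⟨1, Or.inl rfl, Or.inl ?_⟩
      rw [← tw_N1 u, tw_tw]
  · subst h
    rcases hε with h' | h' <;> subst h'
    · exact ⟨3, Or.inr rfl, Or.inr ⟨i, hi0, tw_N2 u i hi0⟩⟩
    · refine ⟨1, Or.inl rfl, Or.inr ⟨i, hi0, ?_⟩⟩
      rw [← tw_N2 u i hi0, tw_tw]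

/-- there are `2n` distinct neighbours; so if fewer than `2n` vertices are
forbidden some neighbour survives. -/
lemma exists_nbr (u : V n) (F : Finset (V n)) (hF : F.card < 2 * n) :
    ∃ s : V n, (BH n).Adj u s ∧ s ∉ F := by
  by_contra h
  push_neg at h
  -- injection from Bool × Fin n into F
  set f : Bool × Fin n → V n := fun p =>
    if p.2 = 0 then N1 u (if p.1 then 1 else 3) else N2 u (if p.1 then 1 else 3) p.2 with hf
  have hadj : ∀ p : Bool × Fin n, (BH n).Adj u (f p) := by
    rintro ⟨b, i⟩
    by_cases hi : i = 0
    · simp only [hf, hi, if_pos rfl]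
      rw [adj_iff]
      exact ⟨if b then 1 else 3, by cases b <;> simp, Or.inl rfl⟩
    · simp only [hf, if_neg hi]
      rw [adj_iff]
      exact ⟨if b then 1 else 3, by cases b <;> simp, Or.inr ⟨i, hi, rfl⟩⟩
  have hmem : ∀ p : Bool × Fin n, f p ∈ F := fun p => h _ (hadj p)
  have hinj : Function.Injective f := by
    have hone3 : ∀ b : Bool, ((if b then (1:ZMod 4) else 3) = 1 ∨ (if b then (1:ZMod 4) else 3) = 3) := by
      intro b; cases b <;> simp
    rintro ⟨b, i⟩ ⟨b', i'⟩ hEq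
    simp only [hf] at hEq
    by_cases hi : i = 0 <;> by_cases hi' : i' = 0
    · subst hi; subst hi'
      rw [if_pos rfl, if_pos rfl] at hEq
      have := congrFun hEq 0
      rw [N1_zero, N1_zero] at this
      have hb := ite13_inj (add_left_cancel this)
      subst hb; rfl
    · rw [if_pos hi, if_neg hi'] at hEq
      have := congrFun hEq i'
      rw [N1_ne _ _ _ hi', N2_self] at this
      exact absurd (left_eq_add.mp this) (sg_ne_zero (u 0))
    · rw [if_neg hi, if_pos hi'] at hEq
      have := congrFun hEq i
      rw [N1_ne _ _ _ hi, N2_self] at this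
      exact absurd (add_eq_left.mp this) (sg_ne_zero (u 0))
    · rw [if_neg hi, if_neg hi'] at hEq
      by_cases hii : i = i'
      · subst hii
        have h0 := congrFun hEq 0
        rw [N2_zero _ _ _ hi, N2_zero _ _ _ hi] at h0
        have hb := ite13_inj (add_left_cancel h0)
        subst hb
        rfl
      · exfalso
        have := congrFun hEq i
        rw [N2_self, N2_ne _ _ _ _ hi hii] at this
        exact absurd (add_eq_left.mp this) (sg_ne_zero (u 0))
  have hcard : Fintype.card (Bool × Fin n) ≤ F.card := by
    classical
    have := Finset.card_le_card_of_injOn (s := Finset.univ) f (fun p _ => hmem p)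
      (hinj.injOn)
    simpa using this
  simp [Fintype.card_prod] at hcard
  omega

/-- reachability avoiding a fault set `F` (each step lands outside `F`). -/
def RA (F : Finset (V n)) (u v : V n) : Prop :=
  Relation.ReflTransGen (fun a b => b ∉ F ∧ (BH n).Adj a b) u v

lemma RA.refl {F : Finset (V n)} (u : V n) : RA F u u := Relation.ReflTransGen.refl

lemma RA.trans {F : Finset (V n)} {u v w : V n} (h : RA F u v) (h' : RA F v w) :
    RA F u w := Relation.ReflTransGen.trans h h'

lemma RA.single {F : Finset (V n)} {u v : V n} (hv : v ∉ F) (h : (BH n).Adj u v) :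
    RA F u v := Relation.ReflTransGen.single ⟨hv, h⟩

lemma RA.symm_aux {F : Finset (V n)} {u v : V n} (h : RA F u v) (hu : u ∉ F) :
    v ∉ F ∧ RA F v u := by
  induction h with
  | refl => exact ⟨hu, RA.refl u⟩
  | tail _ hbc ih =>
    exact ⟨hbc.1, RA.trans (RA.single ih.1 hbc.2.symm) ih.2⟩

lemma RA.symm {F : Finset (V n)} {u v : V n} (hu : u ∉ F) (h : RA F u v) :
    RA F v u := (h.symm_aux hu).2

/-- all vertices along an `RA`-chain starting outside `F` stay in any
adjacency-closed set. -/
lemma RA.closed {F : Finset (V n)} {S : Set (V n)} {u v : V n}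
    (hS : ∀ a b, a ∈ S → b ∉ F → (BH n).Adj a b → b ∈ S)
    (h : RA F u v) (hu : u ∈ S) : v ∈ S := by
  induction h with
  | refl => exact hu
  | tail _ hbc ih => exact hS _ _ ih hbc.1 hbc.2

lemma reachable_induce_of_RA {F : Finset (V n)} {s : Set (V n)}
    (hs : s = (↑F : Set (V n))ᶜ) {u v : V n} (hu' : u ∉ F)
    (h : RA F u v) : ∀ (hu : u ∈ s) (hv : v ∈ s),
      ((BH n).induce s).Reachable ⟨u, hu⟩ ⟨v, hv⟩ := by
  subst hs
  induction h with
  | refl => intro hu hv; rfl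
  | @tail b c hab hbc ih =>
    intro hu hv
    have hb' : b ∉ F := (RA.symm_aux hab hu').1
    have hb : b ∈ (↑F : Set (V n))ᶜ := by simpa using hb'
    exact (ih hu hb).trans (SimpleGraph.Adj.reachable (by exact hbc.2))

/-- reachability in an induced graph gives `RA`. -/
lemma RA_of_reachable_induce {F : Finset (V n)} {s : Set (V n)}
    (hs : s = (↑F : Set (V n))ᶜ) (a b : s)
    (h : ((BH n).induce s).Reachable a b) : RA F ↑a ↑b := by
  subst hs
  obtain ⟨w⟩ := h
  induction w with
  | nil => exact RA.refl _
  | @cons x y z hxy _ ih =>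
    refine RA.trans (RA.single ?_ ?_) ih
    · exact y.2
    · exact hxy

section Copy

variable {m : ℕ} [NeZero m]

lemma castSucc_zero' : (Fin.castSucc (0 : Fin m)) = (0 : Fin (m+1)) := by
  ext; simp

lemma last_ne_zero : (Fin.last m) ≠ (0 : Fin (m+1)) := by
  intro h
  have := congrArg Fin.val h
  simp [Fin.last] at this
  exact (NeZero.ne m) this

lemma castSucc_ne_last (i : Fin m) : (Fin.castSucc i) ≠ Fin.last m :=
  (Fin.castSucc_lt_last i).ne

@[simp] lemma init_zero (u : V (m+1)) : Fin.init u 0 = u 0 := by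
  simp [Fin.init]

lemma castSucc_ne_zero {i : Fin m} (hi : i ≠ 0) : (Fin.castSucc i) ≠ (0 : Fin (m+1)) := by
  intro h
  exact hi (Fin.castSucc_injective _ (h.trans castSucc_zero'.symm))

lemma init_N1 (u : V (m+1)) (ε : ZMod 4) : Fin.init (N1 u ε) = N1 (Fin.init u) ε := by
  funext j
  by_cases hj : j = 0
  · subst hj
    show N1 u ε (Fin.castSucc 0) = _
    rw [castSucc_zero', N1_zero, N1_zero, init_zero]
  · show N1 u ε (Fin.castSucc j) = _
    rw [N1_ne _ _ _ (castSucc_ne_zero hj), N1_ne _ _ _ hj]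
    rfl

lemma init_N2c (u : V (m+1)) (ε : ZMod 4) {i : Fin m} (hi : i ≠ 0) :
    Fin.init (N2 u ε (Fin.castSucc i)) = N2 (Fin.init u) ε i := by
  funext j
  by_cases hj : j = 0
  · subst hj
    show N2 u ε _ (Fin.castSucc 0) = _
    rw [castSucc_zero', N2_zero _ _ _ (castSucc_ne_zero hi), N2_zero _ _ _ hi, init_zero]
  · by_cases hji : j = i
    · subst hji
      show N2 u ε _ (Fin.castSucc j) = _
      rw [N2_self, N2_self, init_zero]
      rfl
    · show N2 u ε _ (Fin.castSucc j) = _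
      rw [N2_ne _ _ _ _ (castSucc_ne_zero hj) (by
        simpa [Fin.ext_iff] using fun h => hji (Fin.ext h)), N2_ne _ _ _ _ hj hji]
      rfl

lemma init_N2l (u : V (m+1)) (ε : ZMod 4) :
    Fin.init (N2 u ε (Fin.last m)) = N1 (Fin.init u) ε := by
  funext j
  by_cases hj : j = 0
  · subst hj
    show N2 u ε _ (Fin.castSucc 0) = _
    rw [castSucc_zero', N2_zero _ _ _ last_ne_zero, N1_zero, init_zero]
  · show N2 u ε _ (Fin.castSucc j) = _
    rw [N2_ne _ _ _ _ (castSucc_ne_zero hj) (castSucc_ne_last j), N1_ne _ _ _ hj]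
    rfl

lemma N1_last (u : V (m+1)) (ε : ZMod 4) : N1 u ε (Fin.last m) = u (Fin.last m) :=
  N1_ne _ _ _ last_ne_zero

lemma N2c_last (u : V (m+1)) (ε : ZMod 4) (i : Fin m) :
    N2 u ε (Fin.castSucc i) (Fin.last m) = u (Fin.last m) :=
  N2_ne _ _ _ _ last_ne_zero (Ne.symm (castSucc_ne_last i))

lemma N2l_last (u : V (m+1)) (ε : ZMod 4) :
    N2 u ε (Fin.last m) (Fin.last m) = u (Fin.last m) + sg (u 0) := N2_self _ _ _

/-- adjacency inside a copy (same last coordinate). -/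
lemma adj_copy {u v : V (m+1)} (hl : u (Fin.last m) = v (Fin.last m)) :
    (BH (m+1)).Adj u v ↔ (BH m).Adj (Fin.init u) (Fin.init v) := by
  constructor
  · intro h
    rw [adj_iff] at h
    obtain ⟨ε, hε, h | ⟨i, hi0, h⟩⟩ := h
    · subst h
      rw [adj_iff]
      exact ⟨ε, hε, Or.inl (init_N1 u ε)⟩
    · rcases Fin.eq_castSucc_or_eq_last i with ⟨i', rfl⟩ | rfl
      · have hi' : i' ≠ 0 := by
          intro h'; subst h'; exact hi0 (by simp)
        subst h
        rw [adj_iff]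
        exact ⟨ε, hε, Or.inr ⟨i', hi', init_N2c u ε hi'⟩⟩
      · exfalso
        have := congrFun h (Fin.last m)
        rw [N2l_last] at this
        rw [this] at hl
        exact add_odd_ne _ _ (sg_mem (u 0)) hl.symm
  · intro h
    rw [adj_iff] at h
    obtain ⟨ε, hε, h | ⟨i, hi0, h⟩⟩ := h
    · rw [adj_iff]
      refine ⟨ε, hε, Or.inl ?_⟩
      funext j
      rcases Fin.eq_castSucc_or_eq_last j with ⟨j', rfl⟩ | rfl
      · have : v (Fin.castSucc j') = N1 (Fin.init u) ε j' := by
          rw [← h]; rfl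
        rw [this]
        by_cases hj' : j' = 0
        · subst hj'
          rw [N1_zero, castSucc_zero', N1_zero, init_zero]
        · rw [N1_ne _ _ _ hj', N1_ne _ _ _ (castSucc_ne_zero hj')]
          rfl
      · rw [N1_last]; exact hl.symm
    · rw [adj_iff]
      refine ⟨ε, hε, Or.inr ⟨Fin.castSucc i, castSucc_ne_zero hi0, ?_⟩⟩
      funext j
      rcases Fin.eq_castSucc_or_eq_last j with ⟨j', rfl⟩ | rfl
      · have : v (Fin.castSucc j') = N2 (Fin.init u) ε i j' := by
          rw [← h]; rfl
        rw [this]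
        by_cases hj' : j' = 0
        · subst hj'
          rw [N2_zero _ _ _ hi0, castSucc_zero', N2_zero _ _ _ (castSucc_ne_zero hi0),
            init_zero]
        · by_cases hji : j' = i
          · subst hji
            rw [N2_self, N2_self, init_zero]
            rfl
          · rw [N2_ne _ _ _ _ hj' hji, N2_ne _ _ _ _ (castSucc_ne_zero hj')
              (by simpa [Fin.ext_iff] using fun h' => hji (Fin.ext h'))]
            rfl
      · rw [N2c_last]; exact hl.symm

/-- adjacency across copies. -/
lemma adj_cross {u v : V (m+1)} (hl : u (Fin.last m) ≠ v (Fin.last m)) :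
    (BH (m+1)).Adj u v ↔ (v = N2 u 1 (Fin.last m) ∨ v = N2 u 3 (Fin.last m)) := by
  constructor
  · intro h
    rw [adj_iff] at h
    obtain ⟨ε, hε, h | ⟨i, hi0, h⟩⟩ := h
    · exfalso; subst h; exact hl (N1_last u ε).symm
    · rcases Fin.eq_castSucc_or_eq_last i with ⟨i', rfl⟩ | rfl
      · exfalso; subst h; exact hl (N2c_last u ε i').symm
      · rcases hε with h' | h' <;> subst h' <;> [left; right] <;> exact h
  · intro h
    rw [adj_iff]
    rcases h with h | h
    · exact ⟨1, Or.inl rfl, Or.inr ⟨Fin.last m, last_ne_zero, h⟩⟩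
    · exact ⟨3, Or.inr rfl, Or.inr ⟨Fin.last m, last_ne_zero, h⟩⟩

lemma tw_snoc (x : V m) (c : ZMod 4) : tw (Fin.snoc x c) = Fin.snoc (tw x) c := by
  funext j
  rcases Fin.eq_castSucc_or_eq_last j with ⟨j', rfl⟩ | rfl
  · by_cases hj' : j' = 0
    · subst hj'
      have hx0 : (Fin.snoc x c : V (m+1)) 0 = x 0 := by
        rw [← castSucc_zero', Fin.snoc_castSucc]
      rw [Fin.snoc_castSucc, castSucc_zero', tw_zero, tw_zero, hx0]
    · rw [tw_ne _ _ (castSucc_ne_zero hj'), Fin.snoc_castSucc, Fin.snoc_castSucc,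
        tw_ne _ _ hj']
  · rw [tw_ne _ _ last_ne_zero, Fin.snoc_last, Fin.snoc_last]

lemma N2_snoc_last (x : V m) (c ε : ZMod 4) :
    N2 (Fin.snoc x c) ε (Fin.last m) = Fin.snoc (N1 x ε) (c + sg (x 0)) := by
  have hx0 : (Fin.snoc x c : V (m+1)) 0 = x 0 := by
    rw [← castSucc_zero', Fin.snoc_castSucc]
  funext j
  rcases Fin.eq_castSucc_or_eq_last j with ⟨j', rfl⟩ | rfl
  · by_cases hj' : j' = 0
    · subst hj'
      rw [Fin.snoc_castSucc, castSucc_zero', N2_zero _ _ _ last_ne_zero, N1_zero, hx0]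
    · rw [N2_ne _ _ _ _ (castSucc_ne_zero hj') (castSucc_ne_last j'), Fin.snoc_castSucc,
        Fin.snoc_castSucc, N1_ne _ _ _ hj']
  · rw [N2l_last, Fin.snoc_last, Fin.snoc_last, hx0]

lemma snoc_zero (x : V m) (c : ZMod 4) : (Fin.snoc x c : V (m+1)) 0 = x 0 := by
  rw [← castSucc_zero', Fin.snoc_castSucc]

/-- transporting an `RA`-chain into a copy. -/
lemma RA_snoc {G : Finset (V m)} {c : ZMod 4} {F : Finset (V (m+1))}
    (hFG : ∀ x : V m, Fin.snoc x c ∈ F → x ∈ G) {p q : V m}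
    (h : RA G p q) : RA F (Fin.snoc p c) (Fin.snoc q c) := by
  induction h with
  | refl => exact RA.refl _
  | @tail b d hab hbd ih =>
    refine RA.trans ih (RA.single ?_ ?_)
    · intro hmem; exact hbd.1 (hFG d hmem)
    · rw [adj_copy (by rw [Fin.snoc_last, Fin.snoc_last])]
      rw [Fin.init_snoc, Fin.init_snoc]
      exact hbd.2

end Copy

/-- the main structural statement: with at most `4n-5` faults, all survivors
outside a single twin pair are mutually reachable. -/
def Qstmt (n : ℕ) [NeZero n] : Prop :=
  ∀ F : Finset (V n), F.card + 5 ≤ 4 * n →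
    ∃ w : V n, ∀ u v : V n, u ∉ F → v ∉ F →
      u ≠ w → u ≠ tw w → v ≠ w → v ≠ tw w → RA F u v

lemma pow_aux : ∀ k, 2 ≤ k → 8 * k ≤ 4 ^ k := by
  intro k hk
  induction k, hk using Nat.le_induction with
  | base => norm_num
  | succ n hn ih =>
    have h16 : 16 ≤ 4 ^ n := by
      calc (16:ℕ) = 4 ^ 2 := by norm_num
      _ ≤ 4 ^ n := Nat.pow_le_pow_right (by norm_num) hn
    have h4 : 4 ^ (n+1) = 4 * 4 ^ n := by ring
    omega

lemma zmod4_cases (a b : ZMod 4) (h : a ≠ b) : a = b + 1 ∨ a = b + 2 ∨ a = b + 3 := by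
  revert a b; decide

lemma zmod4_add_ne (b : ZMod 4) : b + 1 ≠ b ∧ b + 2 ≠ b ∧ b + 3 ≠ b := by
  revert b; decide

lemma sg_even {a : ZMod 4} (h : a = 0 ∨ a = 2) : sg a = 1 := by
  rcases h with h | h <;> subst h <;> rfl

lemma sg_odd {a : ZMod 4} (h : ¬(a = 0 ∨ a = 2)) : sg a = 3 := by
  unfold sg; rw [if_neg h]

section Step

variable {m : ℕ} [NeZero m]

/-- faults of `F` in copy `c`. -/
def Fc (F : Finset (V (m+1))) (c : ZMod 4) : Finset (V (m+1)) :=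
  F.filter (fun u => u (Fin.last m) = c)

lemma mem_Fc {F : Finset (V (m+1))} {c : ZMod 4} {u : V (m+1)} :
    u ∈ Fc F c ↔ u ∈ F ∧ u (Fin.last m) = c := Finset.mem_filter

lemma snoc_mem_imageG {F : Finset (V (m+1))} {c : ZMod 4} (x : V m)
    (hx : Fin.snoc x c ∈ F) : x ∈ (Fc F c).image Fin.init := by
  refine Finset.mem_image.mpr ⟨Fin.snoc x c, ?_, Fin.init_snoc _ _⟩
  exact mem_Fc.mpr ⟨hx, by rw [Fin.snoc_last]⟩

lemma init_not_mem_imageG {F : Finset (V (m+1))} {c : ZMod 4} {x : V (m+1)}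
    (hl : x (Fin.last m) = c) (hx : x ∉ F) : Fin.init x ∉ (Fc F c).image Fin.init := by
  intro hmem
  obtain ⟨f, hf, hfi⟩ := Finset.mem_image.mp hmem
  obtain ⟨hfF, hfl⟩ := mem_Fc.mp hf
  have : f = x := by
    have h1 := Fin.snoc_init_self f
    have h2 := Fin.snoc_init_self x
    rw [hfl] at h1
    rw [hl] at h2
    rw [← h1, ← h2, hfi]
  subst this
  exact hx hfF

/-- survivors of a copy with fewer than `2m` faults are all mutually reachable. -/
lemma copy_conn (hm : 2 ≤ m) (hQ : Qstmt m) {F : Finset (V (m+1))} {c : ZMod 4}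
    (hc : (Fc F c).card < 2 * m) :
    ∀ x y : V (m+1), x (Fin.last m) = c → y (Fin.last m) = c →
      x ∉ F → y ∉ F → RA F x y := by
  intro x y hxl hyl hx hy
  set G := (Fc F c).image Fin.init with hG
  have hGcard : G.card < 2 * m := lt_of_le_of_lt (Finset.card_image_le) hc
  obtain ⟨w, hw⟩ := hQ G (by omega)
  -- escape from the twin pair
  have escape : ∀ p : V m, p ∉ G → ∃ p' : V m, p' ∉ G ∧ p' ≠ w ∧ p' ≠ tw w ∧ RA G p p' := by
    intro p hp
    by_cases h1 : p = w ∨ p = tw w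
    · obtain ⟨s, hadj, hs⟩ := exists_nbr p G hGcard
      have hsw : s ≠ w ∧ s ≠ tw w := by
        rcases h1 with h1 | h1
        · refine ⟨fun h' => ?_, fun h' => ?_⟩
          · rw [h1, h'] at hadj; exact (BH m).irrefl hadj
          · rw [h1, h'] at hadj; exact not_adj_tw w hadj
        · refine ⟨fun h' => ?_, fun h' => ?_⟩
          · rw [h1, h'] at hadj; exact not_adj_tw w hadj.symm
          · rw [h1, h'] at hadj; exact (BH m).irrefl hadj
      exact ⟨s, hs, hsw.1, hsw.2, RA.single hs hadj⟩
    · push_neg at h1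
      exact ⟨p, hp, h1.1, h1.2, RA.refl p⟩
  have hxG : Fin.init x ∉ G := init_not_mem_imageG hxl hx
  have hyG : Fin.init y ∉ G := init_not_mem_imageG hyl hy
  obtain ⟨p', hp1, hp2, hp3, hp4⟩ := escape _ hxG
  obtain ⟨q', hq1, hq2, hq3, hq4⟩ := escape _ hyG
  have hmid : RA G p' q' := hw p' q' hp1 hq1 hp2 hp3 hq2 hq3
  have hall : RA G (Fin.init x) (Fin.init y) :=
    (hp4.trans hmid).trans (RA.symm hyG hq4)
  have htr : RA F (Fin.snoc (Fin.init x) c) (Fin.snoc (Fin.init y) c) := by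
    refine RA_snoc (fun z hz => snoc_mem_imageG z hz) hall
  have ex : Fin.snoc (Fin.init x) c = x := by rw [← hxl]; exact Fin.snoc_init_self x
  have ey : Fin.snoc (Fin.init y) c = y := by rw [← hyl]; exact Fin.snoc_init_self y
  rwa [ex, ey] at htr

/-- there is a surviving cross edge between copies `c` and `c+1`. -/
lemma interface (hm : 2 ≤ m) {F : Finset (V (m+1))} (hF : F.card + 5 ≤ 4 * (m+1))
    (c : ZMod 4) :
    ∃ u v : V (m+1), u ∉ F ∧ v ∉ F ∧ (BH (m+1)).Adj u v ∧
      u (Fin.last m) = c ∧ v (Fin.last m) = c + 1 := by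
  by_contra hno
  push_neg at hno
  -- every x : V m yields a fault
  classical
  set θ : V m → V (m+1) := fun x =>
    if x 0 = 0 ∨ x 0 = 2 then
      (if Fin.snoc x c ∈ F then Fin.snoc x c else N2 (Fin.snoc x c) 1 (Fin.last m))
    else
      (if Fin.snoc x (c+1) ∈ F then Fin.snoc x (c+1)
        else N2 (Fin.snoc x (c+1)) 1 (Fin.last m)) with hθ
  have keyE : ∀ x : V m, (x 0 = 0 ∨ x 0 = 2) → Fin.snoc x c ∉ F →
      N2 (Fin.snoc x c) 1 (Fin.last m) ∈ F := by
    intro x hx hxF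
    by_contra hvF
    refine hno (Fin.snoc x c) (N2 (Fin.snoc x c) 1 (Fin.last m)) hxF hvF ?_ (by rw [Fin.snoc_last]) ?_
    · rw [adj_iff]; exact ⟨1, Or.inl rfl, Or.inr ⟨Fin.last m, last_ne_zero, rfl⟩⟩
    · rw [N2l_last, Fin.snoc_last, snoc_zero, sg_even hx]
  have keyO : ∀ x : V m, ¬(x 0 = 0 ∨ x 0 = 2) → Fin.snoc x (c+1) ∉ F →
      N2 (Fin.snoc x (c+1)) 1 (Fin.last m) ∈ F := by
    intro x hx hxF
    by_contra hvF
    refine hno (N2 (Fin.snoc x (c+1)) 1 (Fin.last m)) (Fin.snoc x (c+1)) hvF hxF ?_ ?_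
      (by rw [Fin.snoc_last])
    · refine SimpleGraph.Adj.symm ?_
      rw [adj_iff]; exact ⟨1, Or.inl rfl, Or.inr ⟨Fin.last m, last_ne_zero, rfl⟩⟩
    · rw [N2l_last, Fin.snoc_last, snoc_zero, sg_odd hx]
      show c + 1 + 3 = c
      have : (1 : ZMod 4) + 3 = 0 := rfl
      rw [add_assoc, this, add_zero]
  have hmaps : ∀ x : V m, x ∈ (Finset.univ : Finset (V m)) → θ x ∈ F := by
    intro x _
    simp only [hθ]
    by_cases hx : x 0 = 0 ∨ x 0 = 2
    · rw [if_pos hx]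
      by_cases hxF : Fin.snoc x c ∈ F
      · rwa [if_pos hxF]
      · rw [if_neg hxF]; exact keyE x hx hxF
    · rw [if_neg hx]
      by_cases hxF : Fin.snoc x (c+1) ∈ F
      · rwa [if_pos hxF]
      · rw [if_neg hxF]; exact keyO x hx hxF
  -- last coordinates of the two branch values
  have lastE : ∀ x : V m, (x 0 = 0 ∨ x 0 = 2) → (θ x) (Fin.last m) = c ∨
      (θ x) (Fin.last m) = c + 1 := by
    intro x hx
    simp only [hθ, if_pos hx]
    by_cases hxF : Fin.snoc x c ∈ F
    · rw [if_pos hxF, Fin.snoc_last]; exact Or.inl rfl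
    · rw [if_neg hxF, N2l_last, Fin.snoc_last, snoc_zero, sg_even hx]; exact Or.inr rfl
  -- fibers have at most 2 elements
  have hfib : ∀ a ∈ F, ((Finset.univ : Finset (V m)).filter fun x => θ x = a).card ≤ 2 := by
    intro a _
    have hsplit : ((Finset.univ : Finset (V m)).filter fun x => θ x = a) ⊆
        (((Finset.univ : Finset (V m)).filter fun x => (x 0 = 0 ∨ x 0 = 2) ∧ θ x = a) ∪
         ((Finset.univ : Finset (V m)).filter fun x => ¬(x 0 = 0 ∨ x 0 = 2) ∧ θ x = a)) := by
      intro x hx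
      rw [Finset.mem_filter] at hx
      by_cases h : x 0 = 0 ∨ x 0 = 2
      · exact Finset.mem_union_left _ (Finset.mem_filter.mpr ⟨hx.1, h, hx.2⟩)
      · exact Finset.mem_union_right _ (Finset.mem_filter.mpr ⟨hx.1, h, hx.2⟩)
    have hE1 : ((Finset.univ : Finset (V m)).filter fun x => (x 0 = 0 ∨ x 0 = 2) ∧ θ x = a).card ≤ 1 := by
      rw [Finset.card_le_one]
      intro x hx y hy
      rw [Finset.mem_filter] at hx hy
      obtain ⟨-, hxe, hxv⟩ := hx
      obtain ⟨-, hye, hyv⟩ := hy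
      have hv : θ x = θ y := by rw [hxv, hyv]
      simp only [hθ, if_pos hxe, if_pos hye] at hv
      by_cases h1 : Fin.snoc x c ∈ F <;> by_cases h2 : Fin.snoc y c ∈ F
      · rw [if_pos h1, if_pos h2] at hv
        have := congrArg Fin.init hv
        rwa [Fin.init_snoc, Fin.init_snoc] at this
      · exfalso
        rw [if_pos h1, if_neg h2] at hv
        have := congrArg (fun z : V (m+1) => z (Fin.last m)) hv
        rw [Fin.snoc_last, N2l_last, Fin.snoc_last, snoc_zero, sg_even hye] at this
        exact (zmod4_add_ne c).1 this.symm
      · exfalso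
        rw [if_neg h1, if_pos h2] at hv
        have := congrArg (fun z : V (m+1) => z (Fin.last m)) hv
        rw [Fin.snoc_last, N2l_last, Fin.snoc_last, snoc_zero, sg_even hxe] at this
        exact (zmod4_add_ne c).1 this
      · rw [if_neg h1, if_neg h2] at hv
        have := N2_inj last_ne_zero 1 hv
        have := congrArg Fin.init this
        rwa [Fin.init_snoc, Fin.init_snoc] at this
    have hO1 : ((Finset.univ : Finset (V m)).filter fun x => ¬(x 0 = 0 ∨ x 0 = 2) ∧ θ x = a).card ≤ 1 := by
      rw [Finset.card_le_one]
      intro x hx y hy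
      rw [Finset.mem_filter] at hx hy
      obtain ⟨-, hxe, hxv⟩ := hx
      obtain ⟨-, hye, hyv⟩ := hy
      have hv : θ x = θ y := by rw [hxv, hyv]
      simp only [hθ, if_neg hxe, if_neg hye] at hv
      by_cases h1 : Fin.snoc x (c+1) ∈ F <;> by_cases h2 : Fin.snoc y (c+1) ∈ F
      · rw [if_pos h1, if_pos h2] at hv
        have := congrArg Fin.init hv
        rwa [Fin.init_snoc, Fin.init_snoc] at this
      · exfalso
        rw [if_pos h1, if_neg h2] at hv
        have hl := congrArg (fun z : V (m+1) => z (Fin.last m)) hv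
        rw [Fin.snoc_last, N2l_last, Fin.snoc_last, snoc_zero, sg_odd hye] at hl
        have h13 : c + 1 + 3 = c := by
          have h0 : (1:ZMod 4) + 3 = 0 := rfl
          rw [add_assoc, h0, add_zero]
        rw [h13] at hl
        exact (zmod4_add_ne c).1 hl
      · exfalso
        rw [if_neg h1, if_pos h2] at hv
        have := congrArg (fun z : V (m+1) => z (Fin.last m)) hv
        rw [Fin.snoc_last, N2l_last, Fin.snoc_last, snoc_zero, sg_odd hxe] at this
        have h13 : c + 1 + 3 = c := by
          have h0 : (1:ZMod 4) + 3 = 0 := rfl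
          rw [add_assoc, h0, add_zero]
        rw [h13] at this
        exact (zmod4_add_ne c).1 this.symm
      · rw [if_neg h1, if_neg h2] at hv
        have := N2_inj last_ne_zero 1 hv
        have := congrArg Fin.init this
        rwa [Fin.init_snoc, Fin.init_snoc] at this
    have hc1 := Finset.card_le_card hsplit
    have hc2 := Finset.card_union_le
      ((Finset.univ : Finset (V m)).filter fun x => (x 0 = 0 ∨ x 0 = 2) ∧ θ x = a)
      ((Finset.univ : Finset (V m)).filter fun x => ¬(x 0 = 0 ∨ x 0 = 2) ∧ θ x = a)
    exact le_trans hc1 (le_trans hc2 (Nat.add_le_add hE1 hO1))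
  have hcount := Finset.card_le_mul_card_image_of_maps_to hmaps 2 hfib
  have huniv : (Finset.univ : Finset (V m)).card = 4 ^ m := by
    simp [Finset.card_univ]
  have hp := pow_aux m hm
  omega

end Step

section StepMain

variable {m : ℕ} [NeZero m]

lemma Qstep (hm : 2 ≤ m) (hQ : Qstmt m) : Qstmt (m+1) := by
  intro F hF
  classical
  have hone : ∀ c c' : ZMod 4, c ≠ c' → 2*m ≤ (Fc F c).card → 2*m ≤ (Fc F c').card → False := by
    intro c c' hcc h1 h2
    have hdisj : Disjoint (Fc F c) (Fc F c') := by
      rw [Finset.disjoint_left]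
      intro a ha ha'
      exact hcc (((mem_Fc.mp ha).2).symm.trans (mem_Fc.mp ha').2)
    have hsub : Fc F c ∪ Fc F c' ⊆ F := by
      intro a ha; rcases Finset.mem_union.mp ha with h | h <;> exact (mem_Fc.mp h).1
    have hcard := Finset.card_le_card hsub
    rw [Finset.card_union_of_disjoint hdisj] at hcard
    omega
  obtain ⟨b, hbgood⟩ : ∃ b : ZMod 4, ∀ c : ZMod 4, c ≠ b → (Fc F c).card < 2*m := by
    by_cases hex : ∃ c, 2*m ≤ (Fc F c).card
    · obtain ⟨b, hb⟩ := hex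
      exact ⟨b, fun c hc => lt_of_not_ge (fun h => hone c b hc h hb)⟩
    · push_neg at hex
      exact ⟨0, fun c _ => hex c⟩
  obtain ⟨u1, v1, hu1F, hv1F, hadj1, hu1l, hv1l⟩ := interface hm hF (b+1)
  obtain ⟨u2, v2, hu2F, hv2F, hadj2, hu2l, hv2l⟩ := interface hm hF (b+2)
  have hconn : ∀ c : ZMod 4, c ≠ b → ∀ x y : V (m+1), x (Fin.last m) = c →
      y (Fin.last m) = c → x ∉ F → y ∉ F → RA F x y :=
    fun c hc => copy_conn hm hQ (hbgood c hc)
  have hb1 : (b+1 : ZMod 4) ≠ b := (zmod4_add_ne b).1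
  have hb2 : (b+2 : ZMod 4) ≠ b := (zmod4_add_ne b).2.1
  have hb3 : (b+3 : ZMod 4) ≠ b := (zmod4_add_ne b).2.2
  have hv1l' : v1 (Fin.last m) = b + 2 := by rw [hv1l]; ring
  have hv2l' : v2 (Fin.last m) = b + 3 := by rw [hv2l]; ring
  have reach : ∀ x : V (m+1), x ∉ F → x (Fin.last m) ≠ b → RA F x v1 := by
    intro x hxF hxl
    rcases zmod4_cases _ _ hxl with h | h | h
    · exact (hconn (b+1) hb1 x u1 h hu1l hxF hu1F).trans (RA.single hv1F hadj1)
    · exact hconn (b+2) hb2 x v1 h hv1l' hxF hv1F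
    · exact ((hconn (b+3) hb3 x v2 h hv2l' hxF hv2F).trans
        (RA.single hu2F hadj2.symm)).trans (hconn (b+2) hb2 u2 v1 hu2l hv1l' hu2F hv1F)
  have finish : ∀ w : V (m+1),
      (∀ u : V (m+1), u ∉ F → u ≠ w → u ≠ tw w → RA F u v1) →
      ∃ w : V (m+1), ∀ u v : V (m+1), u ∉ F → v ∉ F →
        u ≠ w → u ≠ tw w → v ≠ w → v ≠ tw w → RA F u v := by
    intro w hAll
    exact ⟨w, fun u v hu hv h1 h2 h3 h4 =>
      (hAll u hu h1 h2).trans (RA.symm hv (hAll v hv h3 h4))⟩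
  have hop : ∀ u : V (m+1), u ∉ F → u (Fin.last m) = b →
      ¬(N2 u 1 (Fin.last m) ∈ F ∧ N2 u 3 (Fin.last m) ∈ F) → RA F u v1 := by
    intro u huF hul hcross
    obtain ⟨ε, hε, hsF⟩ : ∃ ε, (ε = 1 ∨ ε = 3) ∧ N2 u ε (Fin.last m) ∉ F := by
      by_cases h1 : N2 u 1 (Fin.last m) ∈ F
      · exact ⟨3, Or.inr rfl, fun h3 => hcross ⟨h1, h3⟩⟩
      · exact ⟨1, Or.inl rfl, h1⟩
    have hadj : (BH (m+1)).Adj u (N2 u ε (Fin.last m)) := by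
      rw [adj_iff]; exact ⟨ε, hε, Or.inr ⟨Fin.last m, last_ne_zero, rfl⟩⟩
    have hsl : (N2 u ε (Fin.last m)) (Fin.last m) ≠ b := by
      rw [N2l_last, hul]; exact add_odd_ne b _ (sg_mem (u 0))
    exact (RA.single hsF hadj).trans (reach _ hsF hsl)
  by_cases hlight : (Fc F b).card + 5 ≤ 4 * m
  · -- light bad copy: use Qstmt m inside copy b
    set G := (Fc F b).image Fin.init with hGdef
    have hGcard : G.card + 5 ≤ 4*m := by
      have hh := Finset.card_image_le (s := Fc F b) (f := Fin.init)
      rw [← hGdef] at hh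
      omega
    obtain ⟨w', hw'⟩ := hQ G hGcard
    set w : V (m+1) := Fin.snoc w' b with hwdef
    have hwl : w (Fin.last m) = b := Fin.snoc_last _ _
    have htww : tw w = Fin.snoc (tw w') b := tw_snoc w' b
    have hbconn : ∀ x y : V (m+1), x (Fin.last m) = b → y (Fin.last m) = b →
        x ∉ F → y ∉ F → x ≠ w → x ≠ tw w → y ≠ w → y ≠ tw w → RA F x y := by
      intro x y hxl hyl hxF hyF hxw hxtw hyw hytw
      have hix : Fin.init x ∉ G := init_not_mem_imageG hxl hxF
      have hiy : Fin.init y ∉ G := init_not_mem_imageG hyl hyF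
      have hixw : Fin.init x ≠ w' := fun h => hxw (by
        rw [hwdef, ← h, ← hxl, Fin.snoc_init_self])
      have hixtw : Fin.init x ≠ tw w' := fun h => hxtw (by
        rw [htww, ← h, ← hxl, Fin.snoc_init_self])
      have hiyw : Fin.init y ≠ w' := fun h => hyw (by
        rw [hwdef, ← h, ← hyl, Fin.snoc_init_self])
      have hiytw : Fin.init y ≠ tw w' := fun h => hytw (by
        rw [htww, ← h, ← hyl, Fin.snoc_init_self])
      have hmid := hw' _ _ hix hiy hixw hixtw hiyw hiytw
      have htr := RA_snoc (c := b) (F := F) (fun z hz => snoc_mem_imageG z hz) hmid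
      rwa [show Fin.snoc (Fin.init x) b = x by rw [← hxl]; exact Fin.snoc_init_self x,
           show Fin.snoc (Fin.init y) b = y by rw [← hyl]; exact Fin.snoc_init_self y] at htr
    by_cases hP : ∃ z : V (m+1), z (Fin.last m) = b ∧ z ∉ F ∧ z ≠ w ∧ z ≠ tw w ∧
        (N2 z 1 (Fin.last m) ∉ F ∨ N2 z 3 (Fin.last m) ∉ F)
    · obtain ⟨z, hzl, hzF, hzw, hztw, hzs⟩ := hP
      have hzreach : RA F z v1 := hop z hzF hzl (by
        rcases hzs with h | h
        · exact fun hb' => h hb'.1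
        · exact fun hb' => h hb'.2)
      refine finish w ?_
      intro u huF huw hutw
      by_cases hul : u (Fin.last m) = b
      · exact (hbconn u z hul hzl huF hzF huw hutw hzw hztw).trans hzreach
      · exact reach u huF hul
    · exfalso
      push_neg at hP
      set D := (Finset.univ : Finset (V m)) \ {w', tw w'} with hD
      set ψ : V m → V (m+1) := fun x =>
        if Fin.snoc x b ∈ F then Fin.snoc x b else N2 (Fin.snoc x b) 1 (Fin.last m) with hψ
      have hmaps : ∀ x ∈ D, ψ x ∈ F := by
        intro x hx
        simp only [hψ]
        by_cases h1 : Fin.snoc x b ∈ F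
        · rwa [if_pos h1]
        · rw [if_neg h1]
          have hxw' : x ≠ w' ∧ x ≠ tw w' := by
            rw [hD, Finset.mem_sdiff] at hx
            have := hx.2
            simp only [Finset.mem_insert, Finset.mem_singleton] at this
            tauto
          refine (hP (Fin.snoc x b) (by rw [Fin.snoc_last]) h1 ?_ ?_).1
          · intro h
            rw [hwdef] at h
            have h' := congrArg Fin.init h
            rw [Fin.init_snoc, Fin.init_snoc] at h'
            exact hxw'.1 h'
          · intro h
            rw [htww] at h
            have h' := congrArg Fin.init h
            rw [Fin.init_snoc, Fin.init_snoc] at h'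
            exact hxw'.2 h'
      have hinj : Set.InjOn ψ D := by
        intro x _ y _ hxy
        simp only [hψ] at hxy
        by_cases h1 : Fin.snoc x b ∈ F <;> by_cases h2 : Fin.snoc y b ∈ F
        · rw [if_pos h1, if_pos h2] at hxy
          have := congrArg Fin.init hxy
          rwa [Fin.init_snoc, Fin.init_snoc] at this
        · exfalso
          rw [if_pos h1, if_neg h2] at hxy
          have hl := congrArg (fun z : V (m+1) => z (Fin.last m)) hxy
          rw [Fin.snoc_last, N2l_last, Fin.snoc_last, snoc_zero] at hl
          exact add_odd_ne b _ (sg_mem (y 0)) hl.symm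
        · exfalso
          rw [if_neg h1, if_pos h2] at hxy
          have hl := congrArg (fun z : V (m+1) => z (Fin.last m)) hxy
          rw [Fin.snoc_last, N2l_last, Fin.snoc_last, snoc_zero] at hl
          exact add_odd_ne b _ (sg_mem (x 0)) hl
        · rw [if_neg h1, if_neg h2] at hxy
          have := N2_inj last_ne_zero 1 hxy
          have := congrArg Fin.init this
          rwa [Fin.init_snoc, Fin.init_snoc] at this
      have hDF := Finset.card_le_card_of_injOn ψ hmaps hinj
      have hle2 : ({w', tw w'} : Finset (V m)).card ≤ 2 := by
        refine le_trans (Finset.card_insert_le _ _) ?_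
        simp
      have hDcard := Finset.card_sdiff_of_subset (Finset.subset_univ ({w', tw w'} : Finset (V m)))
      have huniv : (Finset.univ : Finset (V m)).card = 4 ^ m := by
        simp [Finset.card_univ]
      have hp := pow_aux m hm
      rw [hD] at hDF
      omega
  · -- heavy bad copy
    have hFcb : Fc F b ⊆ F := Finset.filter_subset _ _
    have hrc : (F \ Fc F b).card ≤ 3 := by
      rw [Finset.card_sdiff_of_subset hFcb]
      have := Finset.card_le_card hFcb
      omega
    have hcr : ∀ (ζ : V (m+1)) (ε : ZMod 4), ζ (Fin.last m) = b →
        N2 ζ ε (Fin.last m) ∈ F → N2 ζ ε (Fin.last m) ∈ F \ Fc F b := by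
      intro ζ ε hζ hmem
      rw [Finset.mem_sdiff]
      refine ⟨hmem, fun hc => ?_⟩
      have h' := (mem_Fc.mp hc).2
      rw [N2l_last, hζ] at h'
      exact add_odd_ne b _ (sg_mem (ζ 0)) h'
    have hRRtw : ∀ z z' : V (m+1), z (Fin.last m) = b → z ∉ F →
        N2 z 1 (Fin.last m) ∈ F → N2 z 3 (Fin.last m) ∈ F →
        z' (Fin.last m) = b → z' ∉ F →
        N2 z' 1 (Fin.last m) ∈ F → N2 z' 3 (Fin.last m) ∈ F → z' = z ∨ z' = tw z := by
      intro z z' hzl hzF hz1 hz3 hzl' hzF' hz1' hz3'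
      by_contra hcon
      push_neg at hcon
      set a1 := N2 z 1 (Fin.last m) with ha1
      set a2 := N2 z 3 (Fin.last m) with ha2
      set a3 := N2 z' 1 (Fin.last m) with ha3
      set a4 := N2 z' 3 (Fin.last m) with ha4
      have d12 : a1 ≠ a2 := by
        intro h
        have h0 := congrFun h 0
        rw [ha1, ha2, N2_zero _ _ _ last_ne_zero, N2_zero _ _ _ last_ne_zero] at h0
        exact absurd (add_left_cancel h0) (by decide)
      have d34 : a3 ≠ a4 := by
        intro h
        have h0 := congrFun h 0
        rw [ha3, ha4, N2_zero _ _ _ last_ne_zero, N2_zero _ _ _ last_ne_zero] at h0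
        exact absurd (add_left_cancel h0) (by decide)
      have d13 : a1 ≠ a3 := fun h => hcon.1 (N2_inj last_ne_zero 1 h).symm
      have d24 : a2 ≠ a4 := fun h => hcon.1 (N2_inj last_ne_zero 3 h).symm
      have d14 : a1 ≠ a4 := fun h => hcon.2 (N2_one_eq_three last_ne_zero h)
      have d23 : a2 ≠ a3 := fun h => hcon.2 (by
        have h5 := N2_one_eq_three last_ne_zero h.symm
        rw [h5, tw_tw])
      have hsub4 : ({a1, a2, a3, a4} : Finset (V (m+1))) ⊆ F \ Fc F b := by
        intro a ha
        simp only [Finset.mem_insert, Finset.mem_singleton] at ha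
        rcases ha with rfl | rfl | rfl | rfl
        · exact hcr z 1 hzl hz1
        · exact hcr z 3 hzl hz3
        · exact hcr z' 1 hzl' hz1'
        · exact hcr z' 3 hzl' hz3'
      have hc4 : ({a1, a2, a3, a4} : Finset (V (m+1))).card = 4 := by
        rw [Finset.card_insert_of_notMem (by simp [d12, d13, d14]),
          Finset.card_insert_of_notMem (by simp [d23, d24]),
          Finset.card_insert_of_notMem (by simp [d34]),
          Finset.card_singleton]
      have := Finset.card_le_card hsub4
      omega
    by_cases hex : ∃ z : V (m+1), z (Fin.last m) = b ∧ z ∉ F ∧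
        N2 z 1 (Fin.last m) ∈ F ∧ N2 z 3 (Fin.last m) ∈ F
    · obtain ⟨z0, hz0l, hz0F, hz01, hz03⟩ := hex
      refine finish z0 ?_
      intro u huF huw hutw
      by_cases hul : u (Fin.last m) = b
      · refine hop u huF hul ?_
        intro hboth
        rcases hRRtw z0 u hz0l hz0F hz01 hz03 hul huF hboth.1 hboth.2 with h | h
        · exact huw h
        · exact hutw h
      · exact reach u huF hul
    · push_neg at hex
      refine finish (fun _ => 0) ?_
      intro u huF _ _
      by_cases hul : u (Fin.last m) = b
      · exact hop u huF hul (fun hboth => (hex u hul huF hboth.1) hboth.2)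
      · exact reach u huF hul

end StepMain

section Base

def cst (a : ZMod 4) : V 1 := fun _ => a

lemma N1_zero' (p : V 1) (e : ZMod 4) : N1 p e 0 = p 0 + e := N1_zero p e

lemma adj1 (p : V 1) (e : ZMod 4) (he : e = 1 ∨ e = 3) : (BH 1).Adj p (N1 p e) := by
  rw [adj_iff]; exact ⟨e, he, Or.inl rfl⟩

lemma eq_N1_of (p q : V 1) (e : ZMod 4) (h : q 0 = p 0 + e) : q = N1 p e := by
  funext j
  rw [Subsingleton.elim j 0, N1_zero, h]

lemma base1 (G : Finset (V 1)) (hG : G.card ≤ 1) (p q : V 1)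
    (hp : p ∉ G) (hq : q ∉ G) : RA G p q := by
  by_cases h0 : q 0 = p 0
  · have hpq : q = p := by funext j; rw [Subsingleton.elim j 0, h0]
    rw [hpq]
    exact RA.refl p
  · rcases zmod4_cases _ _ h0 with h | h | h
    · have hq2 := eq_N1_of p q 1 h
      rw [hq2]
      exact RA.single (hq2 ▸ hq) (adj1 p 1 (Or.inl rfl))
    · have hm12 : N1 p 1 ≠ N1 p 3 := by
        intro hh
        have := congrFun hh 0
        rw [N1_zero, N1_zero] at this
        exact absurd (add_left_cancel this) (by decide)
      have hor : N1 p 1 ∉ G ∨ N1 p 3 ∉ G := by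
        by_contra hb
        push_neg at hb
        exact hm12 (Finset.card_le_one.mp hG _ hb.1 _ hb.2)
      rcases hor with hm | hm
      · have hstep2 : q = N1 (N1 p 1) 1 := by
          refine eq_N1_of _ _ _ ?_
          rw [N1_zero, h, add_assoc]
          rfl
        rw [hstep2]
        exact (RA.single hm (adj1 p 1 (Or.inl rfl))).trans
          (RA.single (hstep2 ▸ hq) (adj1 _ 1 (Or.inl rfl)))
      · have hstep2 : q = N1 (N1 p 3) 3 := by
          refine eq_N1_of _ _ _ ?_
          rw [N1_zero, h, add_assoc]
          rfl
        rw [hstep2]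
        exact (RA.single hm (adj1 p 3 (Or.inr rfl))).trans
          (RA.single (hstep2 ▸ hq) (adj1 _ 3 (Or.inr rfl)))
    · have hq2 := eq_N1_of p q 3 h
      rw [hq2]
      exact RA.single (hq2 ▸ hq) (adj1 p 3 (Or.inr rfl))

lemma copy_conn1 {F : Finset (V (1+1))} {c : ZMod 4}
    (hc : (Fc F c).card ≤ 1) :
    ∀ x y : V (1+1), x (Fin.last 1) = c → y (Fin.last 1) = c →
      x ∉ F → y ∉ F → RA F x y := by
  intro x y hxl hyl hx hy
  set G := (Fc F c).image Fin.init with hG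
  have hGcard : G.card ≤ 1 := le_trans (Finset.card_image_le) hc
  have hxG : Fin.init x ∉ G := init_not_mem_imageG hxl hx
  have hyG : Fin.init y ∉ G := init_not_mem_imageG hyl hy
  have hall : RA G (Fin.init x) (Fin.init y) := base1 G hGcard _ _ hxG hyG
  have htr := RA_snoc (c := c) (F := F) (fun z hz => snoc_mem_imageG z hz) hall
  rwa [show Fin.snoc (Fin.init x) c = x by rw [← hxl]; exact Fin.snoc_init_self x,
       show Fin.snoc (Fin.init y) c = y by rw [← hyl]; exact Fin.snoc_init_self y] at htr

def vx (a c : ZMod 4) : V (1+1) := Fin.snoc (cst a) c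

lemma vx_zero (a c : ZMod 4) : vx a c 0 = a := by
  rw [vx, snoc_zero]; rfl

lemma vx_last (a c : ZMod 4) : vx a c (Fin.last 1) = c := by
  rw [vx, Fin.snoc_last]

lemma vx_inj {a c a' c' : ZMod 4} (h : vx a c = vx a' c') : a = a' ∧ c = c' := by
  constructor
  · have := congrFun h 0
    rwa [vx_zero, vx_zero] at this
  · have := congrFun h (Fin.last 1)
    rwa [vx_last, vx_last] at this

lemma vx_ne {a c a' c' : ZMod 4} (h : a ≠ a' ∨ c ≠ c') : vx a c ≠ vx a' c' := by
  intro hh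
  obtain ⟨h1, h2⟩ := vx_inj hh
  rcases h with h | h
  · exact h h1
  · exact h h2

lemma N1_cst (a e : ZMod 4) : N1 (cst a) e = cst (a + e) := by
  funext j
  rw [Subsingleton.elim j 0, N1_zero]
  rfl

lemma N2_vx (a c ε : ZMod 4) : N2 (vx a c) ε (Fin.last 1) = vx (a + ε) (c + sg a) := by
  rw [vx, N2_snoc_last, N1_cst]
  rfl

lemma eo_eps : ∀ e o : ZMod 4, (e = 0 ∨ e = 2) → (o = 1 ∨ o = 3) →
    ∃ ε : ZMod 4, (ε = 1 ∨ ε = 3) ∧ e + ε = o := by decide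

def xedge (F : Finset (V (1+1))) (c : ZMod 4) : Prop :=
  ∃ u v : V (1+1), u ∉ F ∧ v ∉ F ∧ (BH (1+1)).Adj u v ∧
    u (Fin.last 1) = c ∧ v (Fin.last 1) = c + 1

lemma xedge_of {F : Finset (V (1+1))} (c : ZMod 4)
    (he : vx 0 c ∉ F ∨ vx 2 c ∉ F) (ho : vx 1 (c+1) ∉ F ∨ vx 3 (c+1) ∉ F) :
    xedge F c := by
  obtain ⟨e, hev, heF⟩ : ∃ e : ZMod 4, (e = 0 ∨ e = 2) ∧ vx e c ∉ F := by
    rcases he with h | h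
    exacts [⟨0, Or.inl rfl, h⟩, ⟨2, Or.inr rfl, h⟩]
  obtain ⟨o, hov, hoF⟩ : ∃ o : ZMod 4, (o = 1 ∨ o = 3) ∧ vx o (c+1) ∉ F := by
    rcases ho with h | h
    exacts [⟨1, Or.inl rfl, h⟩, ⟨3, Or.inr rfl, h⟩]
  obtain ⟨ε, hε, hεo⟩ := eo_eps e o hev hov
  have hveq : vx o (c+1) = N2 (vx e c) ε (Fin.last 1) := by
    rw [N2_vx, hεo, sg_even hev]
  refine ⟨vx e c, vx o (c+1), heF, hoF, ?_, vx_last e c, vx_last o (c+1)⟩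
  rw [hveq, adj_iff]
  exact ⟨ε, hε, Or.inr ⟨Fin.last 1, last_ne_zero, rfl⟩⟩

lemma dead_of_not_xedge {F : Finset (V (1+1))} {c : ZMod 4} (h : ¬ xedge F c) :
    (vx 0 c ∈ F ∧ vx 2 c ∈ F) ∨ (vx 1 (c+1) ∈ F ∧ vx 3 (c+1) ∈ F) := by
  by_contra hb
  push_neg at hb
  apply h
  refine xedge_of c ?_ ?_
  · by_cases h0 : vx 0 c ∈ F
    · exact Or.inr (hb.1 h0)
    · exact Or.inl h0
  · by_cases h0 : vx 1 (c+1) ∈ F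
    · exact Or.inr (hb.2 h0)
    · exact Or.inl h0

lemma four_le_card {F : Finset (V (1+1))} {p1 p2 p3 p4 : V (1+1)}
    (h1 : p1 ∈ F) (h2 : p2 ∈ F) (h3 : p3 ∈ F) (h4 : p4 ∈ F)
    (d12 : p1 ≠ p2) (d13 : p1 ≠ p3) (d14 : p1 ≠ p4)
    (d23 : p2 ≠ p3) (d24 : p2 ≠ p4) (d34 : p3 ≠ p4) : 4 ≤ F.card := by
  have hsub : ({p1, p2, p3, p4} : Finset (V (1+1))) ⊆ F := by
    intro a ha
    simp only [Finset.mem_insert, Finset.mem_singleton] at ha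
    rcases ha with rfl | rfl | rfl | rfl
    exacts [h1, h2, h3, h4]
  have hc4 : ({p1, p2, p3, p4} : Finset (V (1+1))).card = 4 := by
    rw [Finset.card_insert_of_notMem (by simp [d12, d13, d14]),
      Finset.card_insert_of_notMem (by simp [d23, d24]),
      Finset.card_insert_of_notMem (by simp [d34]),
      Finset.card_singleton]
  calc 4 = _ := hc4.symm
  _ ≤ F.card := Finset.card_le_card hsub

lemma Q2 : Qstmt (1+1) := by
  intro F hF
  classical
  have hF3 : F.card ≤ 3 := by omega
  have finish2 : ∀ v1 : V (1+1), v1 ∉ F →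
      (∀ u : V (1+1), u ∉ F → RA F u v1) →
      ∃ w : V (1+1), ∀ u v : V (1+1), u ∉ F → v ∉ F →
        u ≠ w → u ≠ tw w → v ≠ w → v ≠ tw w → RA F u v := by
    intro v1 _ hAll
    exact ⟨fun _ => 0, fun u v hu hv _ _ _ _ =>
      (hAll u hu).trans (RA.symm hv (hAll v hv))⟩
  by_cases hbad : ∃ b : ZMod 4, 2 ≤ (Fc F b).card
  · obtain ⟨b, hb⟩ := hbad
    have hsubb : Fc F b ⊆ F := Finset.filter_subset _ _
    have hcd : (F \ Fc F b).card ≤ 1 := by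
      rw [Finset.card_sdiff_of_subset hsubb]
      have := Finset.card_le_card hsubb
      omega
    have hrest : ∀ p q : V (1+1), p ∈ F → q ∈ F → p (Fin.last 1) ≠ b →
        q (Fin.last 1) ≠ b → p = q := by
      intro p q hp hq hpl hql
      refine Finset.card_le_one.mp hcd p ?_ q ?_ <;> rw [Finset.mem_sdiff]
      · exact ⟨hp, fun hc => hpl (mem_Fc.mp hc).2⟩
      · exact ⟨hq, fun hc => hql (mem_Fc.mp hc).2⟩
    have hgood : ∀ c : ZMod 4, c ≠ b → (Fc F c).card ≤ 1 := by
      intro c hc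
      refine le_trans (Finset.card_le_card ?_) hcd
      intro a ha
      rw [Finset.mem_sdiff]
      exact ⟨(mem_Fc.mp ha).1, fun hc' => hc ((mem_Fc.mp ha).2.symm.trans (mem_Fc.mp hc').2)⟩
    have hx : ∀ c : ZMod 4, c ≠ b → c + 1 ≠ b → xedge F c := by
      intro c h1 h2
      refine xedge_of c ?_ ?_
      · by_contra hbth
        push_neg at hbth
        exact vx_ne (a := (0:ZMod 4)) (c := c) (a' := (2:ZMod 4)) (c' := c)
          (Or.inl (by decide))
          (hrest _ _ hbth.1 hbth.2 (by rw [vx_last]; exact h1) (by rw [vx_last]; exact h1))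
      · by_contra hbth
        push_neg at hbth
        exact vx_ne (a := (1:ZMod 4)) (c := c+1) (a' := (3:ZMod 4)) (c' := c+1)
          (Or.inl (by decide))
          (hrest _ _ hbth.1 hbth.2 (by rw [vx_last]; exact h2) (by rw [vx_last]; exact h2))
    have hb1 : (b+1 : ZMod 4) ≠ b := (zmod4_add_ne b).1
    have hb2 : (b+2 : ZMod 4) ≠ b := (zmod4_add_ne b).2.1
    have hb3 : (b+3 : ZMod 4) ≠ b := (zmod4_add_ne b).2.2
    obtain ⟨u1, v1, hu1F, hv1F, hadj1, hu1l, hv1l⟩ := hx (b+1) hb1 (by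
      rw [show (b+1+1 : ZMod 4) = b + 2 by ring]; exact hb2)
    obtain ⟨u2, v2, hu2F, hv2F, hadj2, hu2l, hv2l⟩ := hx (b+2) hb2 (by
      rw [show (b+2+1 : ZMod 4) = b + 3 by ring]; exact hb3)
    have hconn : ∀ c : ZMod 4, c ≠ b → ∀ x y : V (1+1), x (Fin.last 1) = c →
        y (Fin.last 1) = c → x ∉ F → y ∉ F → RA F x y :=
      fun c hc => copy_conn1 (hgood c hc)
    have hv1l' : v1 (Fin.last 1) = b + 2 := by rw [hv1l]; ring
    have hv2l' : v2 (Fin.last 1) = b + 3 := by rw [hv2l]; ring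
    have reach : ∀ x : V (1+1), x ∉ F → x (Fin.last 1) ≠ b → RA F x v1 := by
      intro x hxF hxl
      rcases zmod4_cases _ _ hxl with h | h | h
      · exact (hconn (b+1) hb1 x u1 h hu1l hxF hu1F).trans (RA.single hv1F hadj1)
      · exact hconn (b+2) hb2 x v1 h hv1l' hxF hv1F
      · exact ((hconn (b+3) hb3 x v2 h hv2l' hxF hv2F).trans
          (RA.single hu2F hadj2.symm)).trans (hconn (b+2) hb2 u2 v1 hu2l hv1l' hu2F hv1F)
    refine finish2 v1 hv1F ?_
    intro u huF
    by_cases hul : u (Fin.last 1) = b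
    · have hlast1 : (N2 u 1 (Fin.last 1)) (Fin.last 1) ≠ b := by
        rw [N2l_last, hul]; exact add_odd_ne b _ (sg_mem (u 0))
      have hlast3 : (N2 u 3 (Fin.last 1)) (Fin.last 1) ≠ b := by
        rw [N2l_last, hul]; exact add_odd_ne b _ (sg_mem (u 0))
      have hde : N2 u 1 (Fin.last 1) ≠ N2 u 3 (Fin.last 1) := by
        intro h
        have h0 := congrFun h 0
        rw [N2_zero _ _ _ last_ne_zero, N2_zero _ _ _ last_ne_zero] at h0
        exact absurd (add_left_cancel h0) (by decide)
      have hor : N2 u 1 (Fin.last 1) ∉ F ∨ N2 u 3 (Fin.last 1) ∉ F := by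
        by_contra hbo
        push_neg at hbo
        exact hde (hrest _ _ hbo.1 hbo.2 hlast1 hlast3)
      obtain ⟨ε, hε, hsF, hsl⟩ : ∃ ε, (ε = 1 ∨ ε = 3) ∧ N2 u ε (Fin.last 1) ∉ F ∧
          (N2 u ε (Fin.last 1)) (Fin.last 1) ≠ b := by
        rcases hor with h | h
        exacts [⟨1, Or.inl rfl, h, hlast1⟩, ⟨3, Or.inr rfl, h, hlast3⟩]
      have hadj : (BH (1+1)).Adj u (N2 u ε (Fin.last 1)) := by
        rw [adj_iff]; exact ⟨ε, hε, Or.inr ⟨Fin.last 1, last_ne_zero, rfl⟩⟩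
      exact (RA.single hsF hadj).trans (reach _ hsF hsl)
    · exact reach u huF hul
  · push_neg at hbad
    have hgood : ∀ c : ZMod 4, (Fc F c).card ≤ 1 := fun c => by have := hbad c; omega
    have hconn : ∀ (c : ZMod 4) (x y : V (1+1)), x (Fin.last 1) = c →
        y (Fin.last 1) = c → x ∉ F → y ∉ F → RA F x y :=
      fun c => copy_conn1 (hgood c)
    have huni : ∀ c c' : ZMod 4, ¬ xedge F c → ¬ xedge F c' → c = c' := by
      intro c c' hc hc'
      by_contra hcc
      have hplus : (c+1 : ZMod 4) ≠ c'+1 := fun h => hcc (by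
        have := congrArg (fun z : ZMod 4 => z + 3) h
        simpa [add_assoc] using this)
      rcases dead_of_not_xedge hc with ⟨m1, m2⟩ | ⟨m1, m2⟩ <;>
        rcases dead_of_not_xedge hc' with ⟨m3, m4⟩ | ⟨m3, m4⟩
      · exact absurd (four_le_card m1 m2 m3 m4
          (vx_ne (Or.inl (by decide))) (vx_ne (Or.inr hcc)) (vx_ne (Or.inl (by decide)))
          (vx_ne (Or.inl (by decide))) (vx_ne (Or.inr hcc)) (vx_ne (Or.inl (by decide))))
          (by omega)
      · exact absurd (four_le_card m1 m2 m3 m4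
          (vx_ne (Or.inl (by decide))) (vx_ne (Or.inl (by decide))) (vx_ne (Or.inl (by decide)))
          (vx_ne (Or.inl (by decide))) (vx_ne (Or.inl (by decide))) (vx_ne (Or.inl (by decide))))
          (by omega)
      · exact absurd (four_le_card m1 m2 m3 m4
          (vx_ne (Or.inl (by decide))) (vx_ne (Or.inl (by decide))) (vx_ne (Or.inl (by decide)))
          (vx_ne (Or.inl (by decide))) (vx_ne (Or.inl (by decide))) (vx_ne (Or.inl (by decide))))
          (by omega)
      · exact absurd (four_le_card m1 m2 m3 m4
          (vx_ne (Or.inl (by decide))) (vx_ne (Or.inr hplus)) (vx_ne (Or.inl (by decide)))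
          (vx_ne (Or.inl (by decide))) (vx_ne (Or.inr hplus)) (vx_ne (Or.inl (by decide))))
          (by omega)
    obtain ⟨e, hx1, hx2, hx3⟩ : ∃ e : ZMod 4, xedge F e ∧ xedge F (e+1) ∧ xedge F (e+2) := by
      by_cases hbl : ∃ c, ¬ xedge F c
      · obtain ⟨cs, hcs⟩ := hbl
        have hxe : ∀ c, c ≠ cs → xedge F c := by
          intro c hc
          by_contra h
          exact hc (huni c cs h hcs)
        refine ⟨cs + 1, hxe _ ((zmod4_add_ne cs).1), ?_, ?_⟩
        · rw [show (cs+1+1 : ZMod 4) = cs + 2 by ring]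
          exact hxe _ ((zmod4_add_ne cs).2.1)
        · rw [show (cs+1+2 : ZMod 4) = cs + 3 by ring]
          exact hxe _ ((zmod4_add_ne cs).2.2)
      · push_neg at hbl
        exact ⟨0, hbl 0, hbl 1, hbl 2⟩
    obtain ⟨p1, q1, hp1F, hq1F, hadj1, hp1l, hq1l⟩ := hx1
    obtain ⟨p2, q2, hp2F, hq2F, hadj2, hp2l, hq2l⟩ := hx2
    obtain ⟨p3, q3, hp3F, hq3F, hadj3, hp3l, hq3l⟩ := hx3
    have hq2l' : q2 (Fin.last 1) = e + 2 := by rw [hq2l]; ring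
    have hq3l' : q3 (Fin.last 1) = e + 3 := by rw [hq3l]; ring
    have hp3l' : p3 (Fin.last 1) = e + 2 := hp3l
    have reach : ∀ x : V (1+1), x ∉ F → RA F x q1 := by
      intro x hxF
      by_cases hxe : x (Fin.last 1) = e
      · exact (hconn e x p1 hxe hp1l hxF hp1F).trans (RA.single hq1F hadj1)
      · rcases zmod4_cases _ _ hxe with h | h | h
        · exact hconn (e+1) x q1 h hq1l hxF hq1F
        · exact ((hconn (e+2) x q2 h hq2l' hxF hq2F).trans
            (RA.single hp2F hadj2.symm)).trans (hconn (e+1) p2 q1 hp2l hq1l hp2F hq1F)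
        · refine (((hconn (e+3) x q3 h hq3l' hxF hq3F).trans
            (RA.single hp3F hadj3.symm)).trans
            ((hconn (e+2) p3 q2 hp3l' hq2l' hp3F hq2F).trans
              (RA.single hp2F hadj2.symm))).trans
            (hconn (e+1) p2 q1 hp2l hq1l hp2F hq1F)
    exact finish2 q1 hq1F (fun u hu => reach u hu)

/-- the structural lemma for all `n ≥ 2`. -/
lemma Qall : ∀ n : ℕ, 2 ≤ n → ∀ [NeZero n], Qstmt n := by
  intro n hn
  induction n, hn using Nat.le_induction with
  | base => intro _; exact Q2
  | succ k hk ih =>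
    intro _
    have hnz : NeZero k := ⟨by omega⟩
    exact Qstep (m := k) hk ih

end Base

end BHaux

namespace BHaux

/-- an `IsRestrictedCut`-style hypothesis forces at least `4n-4` faults. -/
lemma lower_bound {n : ℕ} [NeZero n] (hn : 2 ≤ n) (F : Set (V n))
    (hdisc : ¬ ((BH n).induce Fᶜ).Connected)
    (hdeg : ∀ v : ↥Fᶜ, 1 ≤ (((BH n).induce Fᶜ).neighborSet v).ncard) :
    4 * n - 4 ≤ F.ncard := by
  classical
  by_contra hlt
  push_neg at hlt
  have hfin : F.Finite := Set.toFinite F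
  set Ff : Finset (V n) := hfin.toFinset with hFf
  have hcoe : (↑Ff : Set (V n)) = F := hfin.coe_toFinset
  have hncard : F.ncard = Ff.card := by
    rw [← hcoe]; exact (Set.ncard_coe_finset Ff)
  have hcard : Ff.card + 5 ≤ 4 * n := by omega
  obtain ⟨w, hw⟩ := Qall n hn Ff hcard
  have hmemiff : ∀ x : V n, x ∈ Fᶜ ↔ x ∉ Ff := by
    intro x
    rw [Set.mem_compl_iff, ← hcoe]
    simp
  have hpow := pow_aux n hn
  have hne : ∃ x : V n, x ∈ Fᶜ := by
    by_contra hempty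
    push_neg at hempty
    have hsub : (Finset.univ : Finset (V n)) ⊆ Ff := by
      intro x _
      by_contra hx
      exact hempty x ((hmemiff x).mpr hx)
    have hcc := Finset.card_le_card hsub
    have huniv : (Finset.univ : Finset (V n)).card = 4 ^ n := by
      simp [Finset.card_univ]
    omega
  have key : ∀ a : ↥Fᶜ, ∃ a' : ↥Fᶜ, ((a' : V n) ≠ w ∧ (a' : V n) ≠ tw w) ∧
      ((BH n).induce Fᶜ).Reachable a a' := by
    intro a
    by_cases h1 : (↑a : V n) = w ∨ (↑a : V n) = tw w
    · have hd := hdeg a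
      have hnonempty : (((BH n).induce Fᶜ).neighborSet a).Nonempty := by
        apply Set.nonempty_of_ncard_ne_zero
        omega
      obtain ⟨s, hs⟩ := hnonempty
      rw [SimpleGraph.mem_neighborSet] at hs
      have hadj : (BH n).Adj ↑a ↑s := hs
      refine ⟨s, ⟨?_, ?_⟩, SimpleGraph.Adj.reachable hs⟩
      · intro heq
        rcases h1 with h1 | h1
        · rw [h1, heq] at hadj; exact (BH n).irrefl hadj
        · rw [h1, heq] at hadj; exact not_adj_tw w hadj.symm
      · intro heq
        rcases h1 with h1 | h1
        · rw [h1, heq] at hadj; exact not_adj_tw w hadj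
        · rw [h1, heq] at hadj; exact (BH n).irrefl hadj
    · push_neg at h1
      exact ⟨a, h1, SimpleGraph.Reachable.refl a⟩
  apply hdisc
  obtain ⟨x0, hx0⟩ := hne
  haveI hnee : Nonempty ↥Fᶜ := ⟨⟨x0, hx0⟩⟩
  refine ⟨?_⟩
  intro a b
  obtain ⟨a', ⟨ha1, ha2⟩, hra⟩ := key a
  obtain ⟨b', ⟨hb1, hb2⟩, hrb⟩ := key b
  have haF : (a' : V n) ∉ Ff := (hmemiff _).mp a'.2
  have hbF : (b' : V n) ∉ Ff := (hmemiff _).mp b'.2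
  have hRA : RA Ff ↑a' ↑b' := hw _ _ haF hbF ha1 ha2 hb1 hb2
  have hmid := reachable_induce_of_RA (s := Fᶜ) (by rw [hcoe]) haF hRA a'.2 b'.2
  exact (hra.trans hmid).trans hrb.symm

section Exist

variable {n : ℕ} [NeZero n]

def Avec : Fin 4 → ZMod 4 := ![1, 3, 2, 0]
def Bvec : Fin 4 → ZMod 4 := ![1, 1, 3, 3]

def pat (a bb : ZMod 4) (i : Fin n) : V n :=
  fun j => if j = 0 then a else if j = i then bb else 0

def qv (a : ZMod 4) : V n := fun j => if j = 0 then a else 0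

def cutF (n : ℕ) [NeZero n] : Finset (V n) :=
  Finset.image (fun p : {i : Fin n // i ≠ 0} × Fin 4 =>
    pat (Avec p.2) (Bvec p.2) p.1.1) Finset.univ

lemma pat_zero (a bb : ZMod 4) (i : Fin n) : pat a bb i 0 = a := if_pos rfl

lemma pat_self (a bb : ZMod 4) {i : Fin n} (hi : i ≠ 0) : pat a bb i i = bb := by
  rw [pat, if_neg hi, if_pos rfl]

lemma pat_other (a bb : ZMod 4) (i : Fin n) {j : Fin n} (hj : j ≠ 0) (hji : j ≠ i) :
    pat a bb i j = 0 := by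
  rw [pat, if_neg hj, if_neg hji]

lemma qv_zero (a : ZMod 4) : (qv a : V n) 0 = a := if_pos rfl

lemma qv_other (a : ZMod 4) {j : Fin n} (hj : j ≠ 0) : (qv a : V n) j = 0 := if_neg hj

lemma mem_cutF {v : V n} : v ∈ cutF n ↔
    ∃ i : Fin n, i ≠ 0 ∧ ∃ k : Fin 4, v = pat (Avec k) (Bvec k) i := by
  rw [cutF, Finset.mem_image]
  constructor
  · rintro ⟨⟨⟨i, hi⟩, k⟩, -, h⟩
    exact ⟨i, hi, k, h.symm⟩
  · rintro ⟨i, hi, k, h⟩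
    exact ⟨⟨⟨i, hi⟩, k⟩, Finset.mem_univ _, h.symm⟩

lemma dB1 : ∀ k : Fin 4, Bvec k ≠ 0 := by decide
lemma dAinj : ∀ k k' : Fin 4, Avec k = Avec k' → k = k' := by decide
lemma dAB : ∀ a ε : ZMod 4, (ε = 1 ∨ ε = 3) →
    ∃ k : Fin 4, Avec k = a + ε ∧ Bvec k = sg a := by decide
lemma dtwo : ∀ v0 vi : ZMod 4,
    (∃ k : Fin 4, Avec k = v0 + 1 ∧ Bvec k = vi) →
    (∃ k' : Fin 4, Avec k' = v0 + 3 ∧ Bvec k' = vi) → vi + sg v0 = 2 := by decide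
lemma dnot13 : ∀ x : ZMod 4, (x = 2 ∨ x = 0) → ∀ k : Fin 4, Bvec k ≠ x := by decide

lemma card_cutF (hn : 2 ≤ n) : (cutF n).card = 4 * n - 4 := by
  rw [cutF, Finset.card_image_of_injective _ ?_, Finset.card_univ]
  · rw [Fintype.card_prod, Fintype.card_fin]
    have h1 : Fintype.card {i : Fin n // i ≠ 0} = n - 1 := by
      rw [Fintype.card_subtype_compl, Fintype.card_subtype_eq, Fintype.card_fin]
    rw [h1]
    omega
  · rintro ⟨⟨i, hi⟩, k⟩ ⟨⟨i', hi'⟩, k'⟩ h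
    simp only at h
    have h0 := congrFun h 0
    rw [pat_zero, pat_zero] at h0
    have hk : k = k' := dAinj _ _ h0
    subst hk
    have hii : i = i' := by
      by_contra hii
      have := congrFun h i
      rw [pat_self _ _ hi, pat_other _ _ _ hi hii] at this
      exact dB1 k this
    subst hii
    rfl

lemma qv_not_mem (a : ZMod 4) : (qv a : V n) ∉ cutF n := by
  intro h
  obtain ⟨i, hi, k, h⟩ := mem_cutF.mp h
  have := congrFun h i
  rw [qv_other a hi, pat_self _ _ hi] at this
  exact dB1 k this.symm

lemma N1_qv (a ε : ZMod 4) : N1 (qv a : V n) ε = qv (a + ε) := by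
  funext j
  by_cases hj : j = 0
  · subst hj; rw [N1_zero, qv_zero, qv_zero]
  · rw [N1_ne _ _ _ hj, qv_other _ hj, qv_other _ hj]

lemma N2_qv (a ε : ZMod 4) {i : Fin n} (hi : i ≠ 0) :
    N2 (qv a : V n) ε i = pat (a + ε) (sg a) i := by
  funext j
  by_cases hj : j = 0
  · subst hj; rw [N2_zero _ _ _ hi, qv_zero, pat_zero]
  · by_cases hji : j = i
    · subst hji
      rw [N2_self, pat_self _ _ hj, qv_other _ hj, qv_zero, zero_add]
    · rw [N2_ne _ _ _ _ hj hji, qv_other _ hj, pat_other _ _ _ hj hji]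

lemma closure_qv {a : ZMod 4} {v : V n} (h : (BH n).Adj (qv a) v) :
    (∃ a' : ZMod 4, v = qv a') ∨ v ∈ cutF n := by
  rw [adj_iff] at h
  obtain ⟨ε, hε, h | ⟨i, hi, h⟩⟩ := h
  · subst h; exact Or.inl ⟨a + ε, N1_qv a ε⟩
  · subst h
    right
    obtain ⟨k, hk1, hk2⟩ := dAB a ε hε
    rw [N2_qv a ε hi]
    exact mem_cutF.mpr ⟨i, hi, k, by rw [hk1, hk2]⟩

/-- an explicit surviving neighbour of every vertex outside the cut. -/
lemma exists_nbr_cut (v : V n) : ∃ s : V n, (BH n).Adj v s ∧ s ∉ cutF n := by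
  by_cases h1 : N1 v 1 ∈ cutF n
  · by_cases h3 : N1 v 3 ∈ cutF n
    · obtain ⟨i, hi, k, e1⟩ := mem_cutF.mp h1
      obtain ⟨i', hi', k', e3⟩ := mem_cutF.mp h3
      have hvj : ∀ j : Fin n, j ≠ 0 → j ≠ i → v j = 0 := by
        intro j hj hji
        have := congrFun e1 j
        rwa [N1_ne _ _ _ hj, pat_other _ _ _ hj hji] at this
      have hvi : v i = Bvec k := by
        have := congrFun e1 i
        rwa [N1_ne _ _ _ hi, pat_self _ _ hi] at this
      have hii : i' = i := by
        by_contra hii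
        have := congrFun e3 i
        rw [N1_ne _ _ _ hi, pat_other _ _ _ hi (fun h => hii h.symm)] at this
        rw [this] at hvi
        exact dB1 k hvi.symm
      subst hii
      have hvi' : v i' = Bvec k' := by
        have := congrFun e3 i'
        rwa [N1_ne _ _ _ hi', pat_self _ _ hi'] at this
      have hv0k : Avec k = v 0 + 1 := by
        have := congrFun e1 0
        rw [N1_zero, pat_zero] at this
        exact this.symm
      have hv0k' : Avec k' = v 0 + 3 := by
        have := congrFun e3 0
        rw [N1_zero, pat_zero] at this
        exact this.symm
      have key : v i' + sg (v 0) = 2 :=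
        dtwo (v 0) (v i') ⟨k, hv0k, hvi.symm⟩ ⟨k', hv0k', hvi'.symm⟩
      refine ⟨N2 v 1 i', ?_, ?_⟩
      · rw [adj_iff]; exact ⟨1, Or.inl rfl, Or.inr ⟨i', hi', rfl⟩⟩
      · intro hmem
        obtain ⟨i'', hi'', k'', e⟩ := mem_cutF.mp hmem
        have := congrFun e i''
        rw [pat_self _ _ hi''] at this
        by_cases hii2 : i'' = i'
        · subst hii2
          rw [N2_self, key] at this
          exact dnot13 2 (Or.inl rfl) k'' this.symm
        · rw [N2_ne _ _ _ _ hi'' hii2, hvj i'' hi'' hii2] at this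
          exact dnot13 0 (Or.inr rfl) k'' this.symm
    · exact ⟨N1 v 3, by rw [adj_iff]; exact ⟨3, Or.inr rfl, Or.inl rfl⟩, h3⟩
  · exact ⟨N1 v 1, by rw [adj_iff]; exact ⟨1, Or.inl rfl, Or.inl rfl⟩, h1⟩

end Exist

end BHaux


theorem bh_restricted_one_connectivity (n : ℕ) [NeZero n] (hn : 2 ≤ n) :
    (∃ F : Set (Fin n → ZMod 4), IsRestrictedCut (BH n) 1 F ∧ F.ncard = 4 * n - 4) ∧
    (∀ F : Set (Fin n → ZMod 4), IsRestrictedCut (BH n) 1 F → 4 * n - 4 ≤ F.ncard) := by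
  classical
  constructor
  · refine ⟨(↑(BHaux.cutF n) : Set (Fin n → ZMod 4)), ⟨?_, ?_⟩, ?_⟩
    · -- not connected
      intro hcon
      have hn1 : 1 < n := hn
      set i₀ : Fin n := ⟨1, hn1⟩ with hi₀def
      have hi₀ : i₀ ≠ 0 := by
        intro h
        have := congrArg Fin.val h
        simp [hi₀def] at this
      set zv : BHaux.V n := BHaux.pat 0 2 i₀ with hzv
      have hzmem : zv ∉ BHaux.cutF n := by
        intro h
        obtain ⟨i, hi, k, e⟩ := BHaux.mem_cutF.mp h
        have he := congrFun e i
        rw [BHaux.pat_self _ _ hi] at he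
        by_cases hii : i = i₀
        · subst hii
          rw [hzv, BHaux.pat_self _ _ hi] at he
          exact BHaux.dnot13 2 (Or.inl rfl) k he.symm
        · rw [hzv, BHaux.pat_other _ _ _ hi hii] at he
          exact BHaux.dnot13 0 (Or.inr rfl) k he.symm
      have hq0 : BHaux.qv 0 ∈ (↑(BHaux.cutF n) : Set (Fin n → ZMod 4))ᶜ := by
        intro h
        exact BHaux.qv_not_mem 0 h
      have hz : zv ∈ (↑(BHaux.cutF n) : Set (Fin n → ZMod 4))ᶜ := by
        intro h
        exact hzmem h
      have hreach := hcon.preconnected ⟨BHaux.qv 0, hq0⟩ ⟨zv, hz⟩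
      have hRA := BHaux.RA_of_reachable_induce rfl _ _ hreach
      have hz' : zv ∈ {v : BHaux.V n | ∃ a, v = BHaux.qv a} := by
        refine BHaux.RA.closed ?_ hRA ⟨0, rfl⟩
        rintro a b ⟨a', rfl⟩ hb hadj
        rcases BHaux.closure_qv hadj with ⟨a'', h⟩ | h
        · exact ⟨a'', h⟩
        · exact absurd h hb
      obtain ⟨a, ha⟩ := hz'
      have h2 := congrFun ha i₀
      rw [hzv, BHaux.pat_self _ _ hi₀, BHaux.qv_other _ hi₀] at h2
      exact absurd h2 (by decide)
    · -- minimum degree 1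
      intro v
      obtain ⟨s, hadj, hs⟩ := BHaux.exists_nbr_cut (n := n) ↑v
      have hs' : s ∈ (↑(BHaux.cutF n) : Set (Fin n → ZMod 4))ᶜ := fun hh => hs hh
      have hmem : (⟨s, hs'⟩ : ↥(↑(BHaux.cutF n) : Set (Fin n → ZMod 4))ᶜ) ∈
          (((BH n).induce (↑(BHaux.cutF n) : Set (Fin n → ZMod 4))ᶜ).neighborSet v) := by
        exact hadj
      have hfin := Set.toFinite
        (((BH n).induce (↑(BHaux.cutF n) : Set (Fin n → ZMod 4))ᶜ).neighborSet v)
      have := (Set.ncard_pos hfin).mpr ⟨_, hmem⟩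
      omega
    · rw [Set.ncard_coe_finset]
      exact BHaux.card_cutF hn
  · rintro F ⟨hdisc, hdeg⟩
    exact BHaux.lower_bound hn F hdisc hdeg
end
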